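/- arXiv:2209.11826 — 7 statements merged into one kernel-verified Lean document; each statement's English description precedes it below -/
import Mathlib

section
/- If Q is an n×n matrix such that -Q is an irreducible Metzler matrix with s(-Q)=0, and B̂ is a nonnegative diagonal matrix with at least one strictly positive diagonal entry, then -Q - B̂ is Hurwitz, i.e., every eigenvalue of -Q - B̂ has strictly negative real part. -/
open Matrix
open Finset

/-- A real square matrix is Metzler if all off-diagonal entries are nonnegative. -/
def IsMetzler {m : Type*} [Fintype m] (A : Matrix m m ℝ) : Prop :=
  ∀ i j, i ≠ j → 0 ≤ A i j

/-- A matrix is irreducible if its associated directed graph is strongly connected,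
equivalently for every nonempty proper subset `S` of indices there is a nonzero
entry from `S` to its complement. -/
def IrreducibleMat {m : Type*} [Fintype m] [DecidableEq m] (A : Matrix m m ℝ) : Prop :=
  ∀ S : Finset m, S.Nonempty → S ≠ Finset.univ → ∃ i ∈ S, ∃ j ∈ Sᶜ, A i j ≠ 0

/-- The spectrum (set of complex eigenvalues) of a real square matrix. -/
noncomputable def specSet {m : Type*} [Fintype m] [DecidableEq m]
    (A : Matrix m m ℝ) : Set ℂ :=
  spectrum ℂ (A.map (algebraMap ℝ ℂ))

/-- `s(A)`: the largest real part of an eigenvalue of `A`. -/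
noncomputable def spectralAbscissa {m : Type*} [Fintype m] [DecidableEq m]
    (A : Matrix m m ℝ) : ℝ :=
  sSup (Complex.re '' specSet A)

/-- `ρ(A)`: the spectral radius of `A`. -/
noncomputable def specRadius {m : Type*} [Fintype m] [DecidableEq m]
    (A : Matrix m m ℝ) : ℝ :=
  sSup ((fun z : ℂ => ‖z‖) '' specSet A)

/-- A real square matrix is Hurwitz if every eigenvalue has strictly negative real part. -/
def IsHurwitz {m : Type*} [Fintype m] [DecidableEq m] (A : Matrix m m ℝ) : Prop :=
  ∀ z ∈ specSet A, z.re < 0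

section AuxPF
variable {n : ℕ}


lemma map_mulVec_ofReal (M : Matrix (Fin n) (Fin n) ℝ) (u : Fin n → ℝ) :
    (M.map (algebraMap ℝ ℂ)) *ᵥ (fun i => (u i : ℂ)) = fun i => ((M *ᵥ u) i : ℂ) := by
  ext i
  simp [Matrix.mulVec, dotProduct]

lemma mem_specSet_iff_det (M : Matrix (Fin n) (Fin n) ℝ) (z : ℂ) :
    z ∈ specSet M ↔ (z • (1 : Matrix (Fin n) (Fin n) ℂ) - M.map (algebraMap ℝ ℂ)).det = 0 := by
  rw [specSet, spectrum.mem_iff, Algebra.algebraMap_eq_smul_one,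
    Matrix.isUnit_iff_isUnit_det, isUnit_iff_ne_zero, not_not]

lemma mem_specSet_iff_eigen (M : Matrix (Fin n) (Fin n) ℝ) (z : ℂ) :
    z ∈ specSet M ↔ ∃ v : Fin n → ℂ, v ≠ 0 ∧ (M.map (algebraMap ℝ ℂ)) *ᵥ v = z • v := by
  rw [mem_specSet_iff_det, ← Matrix.exists_mulVec_eq_zero_iff]
  constructor
  · rintro ⟨v, hv, hveq⟩
    refine ⟨v, hv, ?_⟩
    have := hveq
    rw [Matrix.sub_mulVec, Matrix.smul_mulVec, Matrix.one_mulVec, sub_eq_zero] at this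
    exact this.symm
  · rintro ⟨v, hv, hveq⟩
    refine ⟨v, hv, ?_⟩
    rw [Matrix.sub_mulVec, Matrix.smul_mulVec, Matrix.one_mulVec, sub_eq_zero, hveq]

lemma specSet_transpose (M : Matrix (Fin n) (Fin n) ℝ) : specSet Mᵀ = specSet M := by
  ext z
  rw [mem_specSet_iff_det, mem_specSet_iff_det]
  have : z • (1 : Matrix (Fin n) (Fin n) ℂ) - Mᵀ.map (algebraMap ℝ ℂ)
      = (z • (1 : Matrix (Fin n) (Fin n) ℂ) - M.map (algebraMap ℝ ℂ))ᵀ := by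
    rw [Matrix.transpose_sub, Matrix.transpose_smul, Matrix.transpose_one, ← Matrix.transpose_map]
  rw [this, Matrix.det_transpose]

lemma specSet_shift (M : Matrix (Fin n) (Fin n) ℝ) (c : ℝ) (z : ℂ) (hz : z ∈ specSet M) :
    z + c ∈ specSet (M + c • (1 : Matrix (Fin n) (Fin n) ℝ)) := by
  rw [mem_specSet_iff_det] at hz ⊢
  have : (z + c) • (1 : Matrix (Fin n) (Fin n) ℂ) - (M + c • 1).map (algebraMap ℝ ℂ)
      = z • (1 : Matrix (Fin n) (Fin n) ℂ) - M.map (algebraMap ℝ ℂ) := by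
    ext i j
    by_cases h : i = j <;>
      simp [Matrix.map_apply, Matrix.one_apply, h] <;> ring
  rw [this]; exact hz

open scoped Classical in
noncomputable def vsupp (x : Fin n → ℝ) : Finset (Fin n) := univ.filter (fun i => 0 < x i)

lemma mem_vsupp {x : Fin n → ℝ} {i : Fin n} : i ∈ vsupp x ↔ 0 < x i := by
  classical simp [vsupp]

lemma mulVec_nonneg {M : Matrix (Fin n) (Fin n) ℝ} (hM : ∀ i j, 0 ≤ M i j)
    {x : Fin n → ℝ} (hx : ∀ i, 0 ≤ x i) : ∀ i, 0 ≤ (M *ᵥ x) i := by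
  intro i
  simp only [Matrix.mulVec, dotProduct]
  exact Finset.sum_nonneg fun j _ => mul_nonneg (hM i j) (hx j)

lemma single_le_mulVec {M : Matrix (Fin n) (Fin n) ℝ} (hM : ∀ i j, 0 ≤ M i j)
    {x : Fin n → ℝ} (hx : ∀ i, 0 ≤ x i) (i j : Fin n) :
    M i j * x j ≤ (M *ᵥ x) i := by
  simp only [Matrix.mulVec, dotProduct]
  exact Finset.single_le_sum (f := fun k => M i k * x k)
    (fun k _ => mul_nonneg (hM i k) (hx k)) (mem_univ j)

lemma step_nonneg {A : Matrix (Fin n) (Fin n) ℝ} (hA : ∀ i j, 0 ≤ A i j)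
    {x : Fin n → ℝ} (hx : ∀ i, 0 ≤ x i) :
    ∀ i, 0 ≤ ((1 + Aᵀ) *ᵥ x) i := by
  intro i
  rw [Matrix.add_mulVec, Matrix.one_mulVec]
  exact add_nonneg (hx i) (mulVec_nonneg (fun i j => hA j i) hx i)

lemma step_supp_subset {A : Matrix (Fin n) (Fin n) ℝ} (hA : ∀ i j, 0 ≤ A i j)
    {x : Fin n → ℝ} (hx : ∀ i, 0 ≤ x i) :
    vsupp x ⊆ vsupp ((1 + Aᵀ) *ᵥ x) := by
  intro i hi
  rw [mem_vsupp] at hi ⊢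
  rw [Matrix.add_mulVec, Matrix.one_mulVec]
  have := mulVec_nonneg (M := Aᵀ) (fun i j => hA j i) hx i
  simpa using add_pos_of_pos_of_nonneg hi this

lemma step_supp_ssubset {A : Matrix (Fin n) (Fin n) ℝ} (hA : ∀ i j, 0 ≤ A i j)
    (hIrr : IrreducibleMat A) {x : Fin n → ℝ} (hx : ∀ i, 0 ≤ x i)
    (hne : (vsupp x).Nonempty) (hnu : vsupp x ≠ univ) :
    vsupp x ⊂ vsupp ((1 + Aᵀ) *ᵥ x) := by
  obtain ⟨i, hi, j, hj, hij⟩ := hIrr (vsupp x) hne hnu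
  rw [Finset.mem_compl] at hj
  refine (Finset.ssubset_iff_of_subset (step_supp_subset hA hx)).2 ⟨j, ?_, hj⟩
  rw [mem_vsupp, Matrix.add_mulVec, Matrix.one_mulVec]
  have h2 : Aᵀ j i * x i ≤ (Aᵀ *ᵥ x) j := single_le_mulVec (fun i j => hA j i) hx j i
  have h3 : 0 < Aᵀ j i * x i :=
    mul_pos (lt_of_le_of_ne (hA i j) (Ne.symm hij)) (mem_vsupp.1 hi)
  have : 0 < (Aᵀ *ᵥ x) j := lt_of_lt_of_le h3 h2
  simpa using add_pos_of_nonneg_of_pos (hx j) this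

lemma pow_supp (A : Matrix (Fin n) (Fin n) ℝ) (hA : ∀ i j, 0 ≤ A i j)
    (hIrr : IrreducibleMat A) (x : Fin n → ℝ) (hx : ∀ i, 0 ≤ x i)
    (hne : (vsupp x).Nonempty) (k : ℕ) :
    (∀ i, 0 ≤ (((1 + Aᵀ) ^ k) *ᵥ x) i) ∧
      min n ((vsupp x).card + k) ≤ (vsupp (((1 + Aᵀ) ^ k) *ᵥ x)).card := by
  induction k with
  | zero => simpa using fun i => hx i
  | succ k ih =>
    obtain ⟨h0, hcard⟩ := ih
    set y := ((1 + Aᵀ) ^ k) *ᵥ x with hy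
    have hstep : ((1 + Aᵀ) ^ (k + 1)) *ᵥ x = (1 + Aᵀ) *ᵥ y := by
      rw [hy, Matrix.mulVec_mulVec, ← pow_succ']
    rw [hstep]
    refine ⟨step_nonneg hA h0, ?_⟩
    by_cases hu : vsupp y = univ
    · have : vsupp y ⊆ vsupp ((1 + Aᵀ) *ᵥ y) := step_supp_subset hA h0
      have : (univ : Finset (Fin n)).card ≤ (vsupp ((1 + Aᵀ) *ᵥ y)).card :=
        Finset.card_le_card (hu ▸ this)
      simp only [Finset.card_univ, Fintype.card_fin] at this
      exact le_trans (min_le_left _ _) this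
    · have hn1 : 1 ≤ (vsupp x).card := Finset.card_pos.2 hne
      have hyne : (vsupp y).Nonempty := by
        rw [← Finset.card_pos]
        have hn2 : 0 < n := Fin.pos_iff_nonempty.2 ⟨hne.choose⟩
        omega
      have hlt := Finset.card_lt_card (step_supp_ssubset hA hIrr h0 hyne hu)
      have hyn : (vsupp y).card < n := by
        have := Finset.card_lt_card (Finset.ssubset_univ_iff.2 hu)
        simpa using this
      omega


lemma pow_pos_mulVec (A : Matrix (Fin n) (Fin n) ℝ) (hA : ∀ i j, 0 ≤ A i j)
    (hIrr : IrreducibleMat A) (x : Fin n → ℝ) (hx : ∀ i, 0 ≤ x i) (hx0 : x ≠ 0) :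
    ∀ j, 0 < (((1 + Aᵀ) ^ n) *ᵥ x) j := by
  have hne : (vsupp x).Nonempty := by
    obtain ⟨i, hi⟩ := Function.ne_iff.1 hx0
    exact ⟨i, mem_vsupp.2 (lt_of_le_of_ne (hx i) (Ne.symm hi))⟩
  obtain ⟨h0, hcard⟩ := pow_supp A hA hIrr x hx hne n
  have h1 : 1 ≤ (vsupp x).card := Finset.card_pos.2 hne
  have hcardn : (vsupp ((1 + Aᵀ) ^ n *ᵥ x)).card = n := by
    have hle : (vsupp ((1 + Aᵀ) ^ n *ᵥ x)).card ≤ n := by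
      simpa using Finset.card_le_card (Finset.subset_univ (vsupp ((1 + Aᵀ) ^ n *ᵥ x)))
    omega
  have huniv : vsupp ((1 + Aᵀ) ^ n *ᵥ x) = univ := by
    apply Finset.eq_univ_of_card
    simpa using hcardn
  intro j
  exact mem_vsupp.1 (huniv ▸ Finset.mem_univ j)

lemma exists_pos_left_eigenvector (A : Matrix (Fin n) (Fin n) ℝ) (hn : 0 < n)
    (hA : ∀ i j, 0 ≤ A i j) (hIrr : IrreducibleMat A) :
    ∃ (r : ℝ) (u : Fin n → ℝ), (∀ i, 0 < u i) ∧ Aᵀ *ᵥ u = r • u := by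
  haveI : Nonempty (Fin n) := ⟨⟨0, hn⟩⟩
  set N := Aᵀ with hN
  set C := (1 + N) ^ n with hC
  have hCpos : ∀ x : Fin n → ℝ, (∀ i, 0 ≤ x i) → x ≠ 0 → ∀ j, 0 < (C *ᵥ x) j :=
    fun x hx hx0 => pow_pos_mulVec A hA hIrr x hx hx0
  -- the Collatz–Wielandt-type function
  set h : (Fin n → ℝ) → ℝ := fun x =>
    univ.inf' univ_nonempty (fun j => (N *ᵥ (C *ᵥ x)) j / (C *ᵥ x) j) with hh
  have hsimplex : ∀ x ∈ stdSimplex ℝ (Fin n), (∀ i, 0 ≤ x i) ∧ x ≠ 0 := by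
    rintro x ⟨hx0, hx1⟩
    refine ⟨hx0, fun hc => ?_⟩
    rw [hc] at hx1; simpa using hx1
  have hcont : ContinuousOn h (stdSimplex ℝ (Fin n)) := by
    apply ContinuousOn.finset_inf'_apply
    intro j _
    have hconM : ∀ (M : Matrix (Fin n) (Fin n) ℝ) (k : Fin n),
        Continuous fun x : Fin n → ℝ => (M *ᵥ x) k := by
      intro M k
      simp only [Matrix.mulVec, dotProduct]
      exact continuous_finset_sum _ fun l _ => (continuous_const.mul (continuous_apply l))
    have hc1 : Continuous fun x : Fin n → ℝ => C *ᵥ x :=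
      continuous_pi fun k => hconM C k
    refine ContinuousOn.div (((hconM N j).comp hc1).continuousOn)
      (((continuous_apply j).comp hc1).continuousOn) ?_
    intro x hx
    exact ne_of_gt (hCpos x (hsimplex x hx).1 (hsimplex x hx).2 j)
  obtain ⟨xs, hxs, hmax⟩ := IsCompact.exists_isMaxOn (isCompact_stdSimplex ℝ (Fin n))
    ⟨_, single_mem_stdSimplex ℝ (⟨0, hn⟩ : Fin n)⟩ hcont
  obtain ⟨y, hy⟩ : ∃ y, y = C *ᵥ xs := ⟨_, rfl⟩
  have hypos : ∀ j, 0 < y j := by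
    rw [hy]; exact hCpos xs (hsimplex xs hxs).1 (hsimplex xs hxs).2
  obtain ⟨r, hr⟩ : ∃ r, r = h xs := ⟨_, rfl⟩
  have hry : ∀ j, r * y j ≤ (N *ᵥ y) j := by
    intro j
    have : r ≤ (N *ᵥ y) j / y j := by
      rw [hr, hh, hy]; exact Finset.inf'_le _ (Finset.mem_univ j)
    exact (le_div_iff₀ (hypos j)).1 this
  refine ⟨r, y, hypos, ?_⟩
  by_contra hneq
  obtain ⟨z, hz⟩ : ∃ z, z = N *ᵥ y - r • y := ⟨_, rfl⟩
  have hz0 : ∀ i, 0 ≤ z i := fun i => by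
    simpa [hz, Pi.sub_apply] using sub_nonneg.2 (hry i)
  have hzne : z ≠ 0 := fun hc => hneq (sub_eq_zero.1 (hz ▸ hc))
  have hCz : ∀ j, 0 < (C *ᵥ z) j := hCpos z hz0 hzne
  have hcomm : N * C = C * N :=
    (((Commute.one_right N).add_right (Commute.refl N)).pow_right n).eq
  obtain ⟨w, hw⟩ : ∃ w, w = C *ᵥ y := ⟨_, rfl⟩
  have hwpos : ∀ j, 0 < w j := by
    rw [hw]; exact hCpos y (fun i => (hypos i).le)
      (fun hc => (hypos ⟨0, hn⟩).ne' (congrFun hc ⟨0, hn⟩))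
  have hkey : ∀ j, r * w j < (N *ᵥ w) j := by
    intro j
    have h1 : N *ᵥ w = C *ᵥ (N *ᵥ y) := by
      rw [hw, Matrix.mulVec_mulVec, hcomm, ← Matrix.mulVec_mulVec]
    have h2 : C *ᵥ z = C *ᵥ (N *ᵥ y) - r • w := by
      rw [hz, Matrix.mulVec_sub, Matrix.mulVec_smul, hw]
    have h3 := hCz j
    rw [h2] at h3
    rw [Pi.sub_apply, Pi.smul_apply, smul_eq_mul, sub_pos] at h3
    rwa [← h1] at h3
  obtain ⟨t, ht⟩ : ∃ t, t = ∑ i, y i := ⟨_, rfl⟩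
  have htpos : 0 < t := ht ▸ Finset.sum_pos (fun i _ => hypos i) univ_nonempty
  obtain ⟨x2, hx2⟩ : ∃ x2 : Fin n → ℝ, x2 = t⁻¹ • y := ⟨_, rfl⟩
  have hx2mem : x2 ∈ stdSimplex ℝ (Fin n) := by
    rw [hx2]
    constructor
    · intro i; exact mul_nonneg (inv_nonneg.2 htpos.le) (hypos i).le
    · simp only [Pi.smul_apply, smul_eq_mul, ← Finset.mul_sum, ← ht]
      field_simp
  have hCx2 : C *ᵥ x2 = t⁻¹ • w := by rw [hx2, Matrix.mulVec_smul, hw]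
  have hNx2 : N *ᵥ (C *ᵥ x2) = t⁻¹ • (N *ᵥ w) := by rw [hCx2, Matrix.mulVec_smul]
  have hlt : r < h x2 := by
    rw [hh]
    rw [Finset.lt_inf'_iff]
    intro j _
    rw [hNx2, hCx2]
    simp only [Pi.smul_apply, smul_eq_mul]
    rw [mul_div_mul_left _ _ (inv_ne_zero htpos.ne')]
    exact (lt_div_iff₀ (hwpos j)).2 (hkey j)
  have hle := hmax hx2mem
  simp only [Set.mem_setOf_eq] at hle
  rw [← hr] at hle
  exact absurd hle (not_le.2 hlt)

end AuxPF

/-- If `-Q` is irreducible Metzler with `s(-Q) = 0`, and `B̂` is a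
nonnegative diagonal matrix with at least one strictly positive diagonal entry,
then `-Q - B̂` is Hurwitz. -/
theorem stmt_0 {n : ℕ} (Q : Matrix (Fin n) (Fin n) ℝ) (b : Fin n → ℝ)
    (hMetz : IsMetzler (-Q)) (hIrr : IrreducibleMat (-Q))
    (hs : spectralAbscissa (-Q) = 0)
    (hb : ∀ i, 0 ≤ b i) (hbpos : ∃ i, 0 < b i) :
    IsHurwitz (-Q - Matrix.diagonal b) := by
  unfold IsHurwitz
  have hs' : sSup (Complex.re '' specSet (-Q)) = 0 := hs
  intro z hz
  by_contra hzre
  push_neg at hzre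
  rcases Nat.eq_zero_or_pos n with hn0 | hn
  · obtain ⟨i, -⟩ := hbpos
    exact absurd i.isLt (by omega)
  haveI : Nonempty (Fin n) := ⟨⟨0, hn⟩⟩
  obtain ⟨i₀, hi₀⟩ := hbpos
  obtain ⟨c, hc⟩ : ∃ c, c = univ.sup' univ_nonempty (fun i => Q i i + b i) := ⟨_, rfl⟩
  have hcQ : ∀ i, Q i i + b i ≤ c := fun i => hc ▸ Finset.le_sup' (f := fun i => Q i i + b i) (mem_univ i)
  obtain ⟨A, hA⟩ : ∃ A, A = -Q + c • (1 : Matrix (Fin n) (Fin n) ℝ) := ⟨_, rfl⟩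
  have hAdiag : ∀ i, A i i = -Q i i + c := by
    intro i; simp [hA, Matrix.add_apply, Matrix.smul_apply, Matrix.one_apply]
  have hAoff : ∀ i j, i ≠ j → A i j = -Q i j := by
    intro i j hij; simp [hA, Matrix.add_apply, Matrix.smul_apply, Matrix.one_apply_ne hij]
  have hAnn : ∀ i j, 0 ≤ A i j := by
    intro i j
    by_cases hij : i = j
    · subst hij; rw [hAdiag]
      have := hcQ i; have := hb i; linarith
    · rw [hAoff i j hij]; exact hMetz i j hij
  have hABnn : ∀ i j, 0 ≤ A i j - Matrix.diagonal b i j := by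
    intro i j
    by_cases hij : i = j
    · subst hij
      rw [hAdiag, Matrix.diagonal_apply_eq]
      have := hcQ i; linarith
    · rw [hAoff i j hij, Matrix.diagonal_apply_ne _ hij, sub_zero]
      exact hMetz i j hij
  have hAirr : IrreducibleMat A := by
    intro S hS1 hS2
    obtain ⟨i, hi, j, hj, hij⟩ := hIrr S hS1 hS2
    refine ⟨i, hi, j, hj, ?_⟩
    have hne : i ≠ j := fun h => (Finset.mem_compl.1 hj) (h ▸ hi)
    rw [hAoff i j hne]
    exact hij
  -- extract eigenvector
  rw [mem_specSet_iff_eigen] at hz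
  obtain ⟨v, hv0, hveq⟩ := hz
  obtain ⟨w, hw⟩ : ∃ w : Fin n → ℝ, w = fun i => ‖v i‖ := ⟨_, rfl⟩
  have hw0 : ∀ i, 0 ≤ w i := fun i => hw ▸ norm_nonneg _
  -- pointwise eigen equation for A - diagonal b
  have hpoint : ∀ i, ∑ j, (((A - Matrix.diagonal b) i j : ℝ) : ℂ) * v j = (z + c) * v i := by
    intro i
    have h1 : ∑ j, (((-Q - Matrix.diagonal b) i j : ℝ) : ℂ) * v j = z * v i := by
      have h2 := congrFun hveq i
      simp only [Matrix.mulVec, dotProduct, Matrix.map_apply, Pi.smul_apply,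
        smul_eq_mul] at h2
      simpa using h2
    have hent : ∀ j, (((A - Matrix.diagonal b) i j : ℝ) : ℂ)
        = (((-Q - Matrix.diagonal b) i j : ℝ) : ℂ) + if i = j then (c : ℂ) else 0 := by
      intro j
      by_cases hij : i = j
      · subst hij
        simp only [Matrix.sub_apply, Matrix.neg_apply, hAdiag, if_pos rfl]
        push_cast
        ring
      · simp only [Matrix.sub_apply, Matrix.neg_apply, hAoff i j hij, if_neg hij, add_zero]
    calc ∑ j, (((A - Matrix.diagonal b) i j : ℝ) : ℂ) * v j
        = ∑ j, ((((-Q - Matrix.diagonal b) i j : ℝ) : ℂ) * v j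
            + (if i = j then (c : ℂ) else 0) * v j) := by
          apply Finset.sum_congr rfl; intro j _; rw [hent j]; ring
      _ = (∑ j, (((-Q - Matrix.diagonal b) i j : ℝ) : ℂ) * v j)
            + ∑ j, (if i = j then (c : ℂ) * v j else 0) := by
          rw [Finset.sum_add_distrib]
          congr 1
          apply Finset.sum_congr rfl; intro j _
          split <;> simp
      _ = z * v i + (c : ℂ) * v i := by rw [h1, Finset.sum_ite_eq]; simp
      _ = (z + c) * v i := by ring
  -- key inequality
  have hineq : ∀ i, (c + b i) * w i ≤ (A *ᵥ w) i := by
    intro i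
    have habs : ‖(z + c) * v i‖ ≤ (A *ᵥ w) i - b i * w i := by
      rw [← hpoint i]
      have h1 : ‖∑ j, (((A - Matrix.diagonal b) i j : ℝ) : ℂ) * v j‖
          ≤ ∑ j, (A i j - Matrix.diagonal b i j) * w j := by
        refine le_trans (norm_sum_le _ _) (le_of_eq (Finset.sum_congr rfl ?_))
        intro j _
        rw [norm_mul, Complex.norm_real, Real.norm_eq_abs, Matrix.sub_apply,
          abs_of_nonneg (hABnn i j), hw]
      refine h1.trans (le_of_eq ?_)
      have hdsum : ∑ j, Matrix.diagonal b i j * w j = b i * w i := by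
        rw [Finset.sum_eq_single i]
        · simp
        · intro j _ hji; rw [Matrix.diagonal_apply_ne' _ hji, zero_mul]
        · intro h; exact absurd (mem_univ i) h
      calc ∑ j, (A i j - Matrix.diagonal b i j) * w j
          = ∑ j, (A i j * w j - Matrix.diagonal b i j * w j) := by
            apply Finset.sum_congr rfl; intro j _; ring
        _ = (∑ j, A i j * w j) - ∑ j, Matrix.diagonal b i j * w j :=
            Finset.sum_sub_distrib _ _
        _ = (A *ᵥ w) i - b i * w i := by rw [hdsum]; rfl
    have hnorm : c ≤ ‖z + c‖ := by
      have h1 : (z + c).re ≤ ‖z + c‖ :=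
        Complex.re_le_norm (z + c)
      have h2 : (z + c).re = z.re + c := by simp
      linarith
    have h3 : ‖(z + c) * v i‖ = ‖z + c‖ * w i := by rw [norm_mul, hw]
    rw [h3] at habs
    have h4 : c * w i ≤ ‖z + c‖ * w i := mul_le_mul_of_nonneg_right hnorm (hw0 i)
    nlinarith [habs, h4]
  -- Perron-Frobenius left eigenvector
  obtain ⟨r, u, hu, huev⟩ := exists_pos_left_eigenvector A hn hAnn hAirr
  -- r ≤ c via the spectral abscissa hypothesis
  have hrc : r ≤ c := by
    have hmem : (r : ℂ) ∈ specSet Aᵀ := by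
      rw [mem_specSet_iff_eigen]
      refine ⟨fun i => (u i : ℂ), ?_, ?_⟩
      · intro hcon
        have := congrFun hcon i₀
        simp only [Pi.zero_apply, Complex.ofReal_eq_zero] at this
        exact (hu i₀).ne' this
      · have := congrFun huev
        ext i
        simp only [Matrix.mulVec, dotProduct, Matrix.map_apply, Pi.smul_apply,
          smul_eq_mul, Complex.coe_algebraMap]
        push_cast
        have h5 := this i
        simp only [Matrix.mulVec, dotProduct, Pi.smul_apply, smul_eq_mul] at h5
        exact_mod_cast congrArg (Complex.ofReal) h5
    rw [specSet_transpose] at hmem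
    have hmem2 : (r : ℂ) + ((-c : ℝ) : ℂ) ∈ specSet (A + (-c) • 1) := specSet_shift A (-c) _ hmem
    have hQA : A + (-c) • (1 : Matrix (Fin n) (Fin n) ℝ) = -Q := by
      rw [hA]; module
    rw [hQA] at hmem2
    have hbdd : BddAbove (Complex.re '' specSet (-Q)) :=
      ((Matrix.finite_spectrum _).image Complex.re).bddAbove
    have hle : ((r : ℂ) + ((-c : ℝ) : ℂ)).re ≤ sSup (Complex.re '' specSet (-Q)) :=
      le_csSup hbdd ⟨_, hmem2, rfl⟩
    rw [hs'] at hle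
    simp only [Complex.add_re, Complex.ofReal_re] at hle
    linarith
  -- dot products
  have hudot : u ⬝ᵥ (A *ᵥ w) = r * (u ⬝ᵥ w) := by
    rw [Matrix.dotProduct_mulVec, ← Matrix.mulVec_transpose, huev, smul_dotProduct]
    rfl
  have huw : 0 ≤ u ⬝ᵥ w := Finset.sum_nonneg fun i _ => mul_nonneg (hu i).le (hw0 i)
  have hsum1 : ∑ i, u i * ((c + b i) * w i) ≤ r * (u ⬝ᵥ w) := by
    rw [← hudot]
    exact Finset.sum_le_sum fun i _ => mul_le_mul_of_nonneg_left (hineq i) (hu i).le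
  have hsum2 : ∑ i, u i * ((c + b i) * w i) = c * (u ⬝ᵥ w) + ∑ i, u i * (b i * w i) := by
    rw [dotProduct, Finset.mul_sum, ← Finset.sum_add_distrib]
    apply Finset.sum_congr rfl; intro i _; ring
  have hbw0 : ∀ i, b i * w i = 0 := by
    have hle : ∑ i, u i * (b i * w i) ≤ 0 := by
      have : r * (u ⬝ᵥ w) ≤ c * (u ⬝ᵥ w) := mul_le_mul_of_nonneg_right hrc huw
      linarith [hsum1, hsum2.symm.le, hsum2.le]
    have hterm : ∀ i ∈ univ, 0 ≤ u i * (b i * w i) :=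
      fun i _ => mul_nonneg (hu i).le (mul_nonneg (hb i) (hw0 i))
    have hall := (Finset.sum_eq_zero_iff_of_nonneg hterm).1
      (le_antisymm hle (Finset.sum_nonneg hterm))
    intro i
    have := hall i (mem_univ i)
    rcases mul_eq_zero.1 this with h | h
    · exact absurd h (hu i).ne'
    · exact h
  -- A *ᵥ w = c • w
  have hAwge : ∀ i, c * w i ≤ (A *ᵥ w) i := by
    intro i; have := hineq i; have := hbw0 i; nlinarith
  have hAweq : ∀ i, (A *ᵥ w) i = c * w i := by
    have hle : ∑ i, u i * ((A *ᵥ w) i - c * w i) ≤ 0 := by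
      have h1 : ∑ i, u i * ((A *ᵥ w) i - c * w i)
          = (u ⬝ᵥ (A *ᵥ w)) - c * (u ⬝ᵥ w) := by
        rw [dotProduct, dotProduct, Finset.mul_sum, ← Finset.sum_sub_distrib]
        apply Finset.sum_congr rfl; intro i _; ring
      rw [h1, hudot]
      have : r * (u ⬝ᵥ w) ≤ c * (u ⬝ᵥ w) := mul_le_mul_of_nonneg_right hrc huw
      linarith
    have hterm : ∀ i ∈ univ, 0 ≤ u i * ((A *ᵥ w) i - c * w i) :=
      fun i _ => mul_nonneg (hu i).le (sub_nonneg.2 (hAwge i))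
    have hall := (Finset.sum_eq_zero_iff_of_nonneg hterm).1
      (le_antisymm hle (Finset.sum_nonneg hterm))
    intro i
    have := hall i (mem_univ i)
    rcases mul_eq_zero.1 this with h | h
    · exact absurd h (hu i).ne'
    · linarith [sub_eq_zero.1 h]
  -- zero set propagation contradiction
  classical
  obtain ⟨Z, hZ⟩ : ∃ Z : Finset (Fin n), Z = univ.filter (fun i => w i = 0) := ⟨_, rfl⟩
  have hmemZ : ∀ i, i ∈ Z ↔ w i = 0 := by intro i; rw [hZ]; simp
  have hi₀Z : i₀ ∈ Z := by
    rw [hmemZ]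
    rcases mul_eq_zero.1 (hbw0 i₀) with h | h
    · exact absurd h hi₀.ne'
    · exact h
  have hZne : Z ≠ univ := by
    obtain ⟨j, hj⟩ := Function.ne_iff.1 hv0
    intro hcon
    have : w j = 0 := (hmemZ j).1 (hcon ▸ mem_univ j)
    rw [hw] at this
    exact hj (norm_eq_zero.1 this)
  obtain ⟨i, hiZ, j, hjZ, hQij⟩ := hIrr Z ⟨i₀, hi₀Z⟩ hZne
  have hij : i ≠ j := fun h => (Finset.mem_compl.1 hjZ) (h ▸ hiZ)
  have hAij : 0 < A i j := by
    rw [hAoff i j hij, show -Q i j = (-Q) i j from (Matrix.neg_apply _ _ _).symm]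
    exact lt_of_le_of_ne (hMetz i j hij) (Ne.symm hQij)
  have hwj : 0 < w j := by
    have h1 : w j ≠ 0 := fun h => (Finset.mem_compl.1 hjZ) ((hmemZ j).2 h)
    exact lt_of_le_of_ne (hw0 j) (Ne.symm h1)
  have hwi : w i = 0 := (hmemZ i).1 hiZ
  have h1 : (A *ᵥ w) i = 0 := by rw [hAweq, hwi, mul_zero]
  have h2 : A i j * w j ≤ (A *ᵥ w) i := single_le_mulVec hAnn hw0 i j
  nlinarith
end

section
/- Consider the tri-virus SIS dynamics ẋ^k = (-D^k + (I - X^1 - X^2 - X^3) B^k) x^k for k = 1,2,3, where X^l = diag(x^l), each D^k is a positive diagonal n×n matrix and each B^k is a nonnegative n×n matrix. Then the set D = {(x^1,x^2,x^3) : x^k ∈ [0,1]^n for k=1,2,3 and x^1 + x^2 + x^3 ≤ 1 entrywise} is positively invariant under the dynamics: any solution starting in D remains in D for all t ≥ 0. -/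
open Matrix

/-- Membership in the sensible domain `𝒟`: each `x^k ∈ [0,1]^n` and
`x¹ + x² + x³ ≤ 1` entrywise. -/
def inDomain {n : ℕ} (x1 x2 x3 : Fin n → ℝ) : Prop :=
  (∀ i, 0 ≤ x1 i ∧ x1 i ≤ 1) ∧ (∀ i, 0 ≤ x2 i ∧ x2 i ≤ 1) ∧
    (∀ i, 0 ≤ x3 i ∧ x3 i ≤ 1) ∧ (∀ i, x1 i + x2 i + x3 i ≤ 1)


lemma mul_nonneg_of_nonpos_nonpos {a b : ℝ} (ha : a ≤ 0) (hb : b ≤ 0) : 0 ≤ a * b := by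
  nlinarith

lemma min_mul_self' (a : ℝ) : min a 0 * a = (min a 0)^2 := by
  rcases le_total a 0 with h | h
  · rw [min_eq_left h]; ring
  · rw [min_eq_right h]; ring

lemma nonneg_of_min_sq_zero {a : ℝ} (h : (min a 0)^2 = 0) : 0 ≤ a := by
  rcases le_total a 0 with h' | h'
  · rw [min_eq_left h'] at h; nlinarith
  · exact h'

lemma hasDerivAt_q (y : ℝ) : HasDerivAt (fun z : ℝ => (min z 0)^2) (2 * min y 0) y := by
  rcases lt_trichotomy y 0 with h | h | h
  · have he : (fun z : ℝ => z^2) =ᶠ[nhds y] fun z => (min z 0)^2 := by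
      filter_upwards [Iio_mem_nhds h] with z hz
      rw [min_eq_left (le_of_lt hz)]
    have hd : HasDerivAt (fun z : ℝ => z^2) (2 * min y 0) y := by
      simpa [min_eq_left h.le, mul_comm] using (hasDerivAt_pow 2 y)
    exact hd.congr_of_eventuallyEq he.symm
  · subst h
    rw [hasDerivAt_iff_isLittleO, Asymptotics.isLittleO_iff]
    intro c hc
    filter_upwards [Metric.ball_mem_nhds (0:ℝ) hc] with z hz
    simp only [Metric.mem_ball, Real.dist_eq, sub_zero] at hz
    have h1 : |min z 0| ≤ |z| := by
      rcases le_total z 0 with h | h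
      · rw [min_eq_left h]
      · rw [min_eq_right h]; simp [abs_nonneg]
    have : ‖(min z 0)^2‖ ≤ c * ‖z‖ := by
      rw [Real.norm_eq_abs, Real.norm_eq_abs, abs_pow, sq]
      calc |min z 0| * |min z 0| ≤ |z| * |z| := mul_le_mul h1 h1 (abs_nonneg _) (abs_nonneg _)
        _ ≤ c * |z| := by nlinarith [abs_nonneg z, hz.le]
    simpa using this
  · have he : (fun _ : ℝ => (0:ℝ)) =ᶠ[nhds y] fun z => (min z 0)^2 := by
      filter_upwards [Ioi_mem_nhds h] with z hz
      rw [min_eq_right (le_of_lt hz)]; ring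
    have hd : HasDerivAt (fun _ : ℝ => (0:ℝ)) (2 * min y 0) y := by
      simpa [min_eq_right h.le] using (hasDerivAt_const y (0:ℝ))
    exact hd.congr_of_eventuallyEq he.symm

lemma gronwall_zero (V W : ℝ → ℝ) (T C : ℝ) (hT : 0 ≤ T)
    (hV : ∀ u, HasDerivAt V (W u) u) (hV0 : ∀ u, 0 ≤ V u) (hVi : V 0 = 0)
    (hW : ∀ u ∈ Set.Icc 0 T, W u ≤ C * V u) : V T = 0 := by
  set G : ℝ → ℝ := fun u => V u * Real.exp (-C * u) with hGdef
  have hG : ∀ u, HasDerivAt G ((W u - C * V u) * Real.exp (-C * u)) u := by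
    intro u
    have h1 : HasDerivAt (fun u : ℝ => -C * u) (-C) u := by
      simpa using (hasDerivAt_id u).const_mul (-C)
    have h3 : HasDerivAt G (W u * Real.exp (-C * u) + V u * (Real.exp (-C * u) * -C)) u :=
      (hV u).mul h1.exp
    convert h3 using 1
    ring
  have hanti : AntitoneOn G (Set.Icc 0 T) := by
    apply antitoneOn_of_deriv_nonpos (convex_Icc 0 T)
    · exact fun u _ => ((hG u).continuousAt).continuousWithinAt
    · exact fun u _ => ((hG u).differentiableAt).differentiableWithinAt
    · intro u hu
      rw [(hG u).deriv]
      apply mul_nonpos_of_nonpos_of_nonneg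
      · have := hW u (by rw [interior_Icc] at hu; exact Set.Ioo_subset_Icc_self hu)
        linarith
      · positivity
  have h1 : G T ≤ G 0 := hanti (Set.left_mem_Icc.2 hT) (Set.right_mem_Icc.2 hT) hT
  have h2 : G 0 = 0 := by simp [hGdef, hVi]
  have h3 : 0 ≤ G T := mul_nonneg (hV0 T) (Real.exp_nonneg _)
  have h4 : V T * Real.exp (-C * T) = 0 := le_antisymm (h2 ▸ h1) h3
  exact (mul_eq_zero.1 h4).resolve_right (Real.exp_ne_zero _)

lemma entry_formula {n : ℕ} (d z y : Fin n → ℝ) (B : Matrix (Fin n) (Fin n) ℝ) (i : Fin n) :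
    ((-(Matrix.diagonal d) + (1 - Matrix.diagonal z) * B).mulVec y) i
      = -(d i) * y i + (1 - z i) * (∑ j, B i j * y j) := by
  have h : ((-(Matrix.diagonal d) + (1 - Matrix.diagonal z) * B).mulVec y) i
      = -(d i) * y i + (1 - z i) * (B.mulVec y i) := by
    simp [Matrix.add_mulVec, Matrix.neg_mulVec, Matrix.sub_mulVec, Matrix.mulVec_diagonal,
      ← Matrix.mulVec_mulVec, Matrix.sub_mul, Matrix.one_mul]
    ring
  rw [h, Matrix.mulVec, dotProduct]

set_option maxHeartbeats 1000000 in
lemma key {n : ℕ} (d : Fin 3 → Fin n → ℝ) (hd : ∀ k i, 0 < d k i)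
    (B : Fin 3 → Matrix (Fin n) (Fin n) ℝ) (hB : ∀ k i j, 0 ≤ B k i j)
    (x : Fin 3 → ℝ → Fin n → ℝ)
    (hx : ∀ k t, HasDerivAt (x k)
      ((-(Matrix.diagonal (d k)) +
        (1 - Matrix.diagonal (x 0 t + x 1 t + x 2 t)) * B k).mulVec (x k t)) t)
    (h0 : ∀ k i, 0 ≤ x k 0 i) (h0' : ∀ i, x 0 0 i + x 1 0 i + x 2 0 i ≤ 1)
    (T : ℝ) (hT : 0 ≤ T) :
    (∀ k i, 0 ≤ x k T i) ∧ (∀ i, x 0 T i + x 1 T i + x 2 T i ≤ 1) := by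
  set s : ℝ → Fin n → ℝ := fun u i => 1 - (x 0 u i + x 1 u i + x 2 u i) with hsdef
  set g : Fin 3 → ℝ → Fin n → ℝ := fun k u i => ∑ j, B k i j * x k u j with hgdef
  set F : Fin 3 → ℝ → Fin n → ℝ :=
    fun k u i => -(d k i) * x k u i + s u i * g k u i with hFdef
  -- coordinatewise derivatives
  have hxc : ∀ k u i, HasDerivAt (fun u => x k u i) (F k u i) u := by
    intro k u i
    have h := (hasDerivAt_pi.1 (hx k u)) i
    have he : ((-(Matrix.diagonal (d k)) +
        (1 - Matrix.diagonal (x 0 u + x 1 u + x 2 u)) * B k).mulVec (x k u)) i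
        = F k u i := by
      rw [entry_formula]
      simp only [hFdef, hgdef, hsdef, Pi.add_apply]
    rwa [he] at h
  have hsc : ∀ u i, HasDerivAt (fun u => s u i)
      (-(F 0 u i + F 1 u i + F 2 u i)) u := by
    intro u i
    have h := (((hxc 0 u i).add (hxc 1 u i)).add (hxc 2 u i)).const_sub 1
    simpa [hsdef, neg_add] using h
  -- continuity
  have hcx : ∀ k i, Continuous (fun u => x k u i) :=
    fun k i => continuous_iff_continuousAt.2 fun u => (hxc k u i).continuousAt
  have hcs : ∀ i, Continuous (fun u => s u i) :=
    fun i => continuous_iff_continuousAt.2 fun u => (hsc u i).continuousAt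
  -- uniform bound A on [0, T]
  set G : ℝ → ℝ := fun u => ∑ i, ((∑ k, |x k u i|) + |s u i|) with hGdef2
  have hGc : Continuous G := by
    apply continuous_finset_sum
    intro i _
    exact Continuous.add (continuous_finset_sum _ fun k _ => (hcx k i).abs) (hcs i).abs
  obtain ⟨C₀, hC₀⟩ := isCompact_Icc.exists_bound_of_continuousOn
    (hGc.continuousOn (s := Set.Icc (0:ℝ) T))
  set A := max C₀ 1 with hAdef
  have hA1 : (1:ℝ) ≤ A := le_max_right _ _
  have hA0 : (0:ℝ) ≤ A := by linarith
  have hGle : ∀ u ∈ Set.Icc (0:ℝ) T, ∀ i, (∑ k, |x k u i|) + |s u i| ≤ A := by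
    intro u hu i
    have h1 : (∑ k, |x k u i|) + |s u i| ≤ G u := by
      apply Finset.single_le_sum (f := fun i => (∑ k, |x k u i|) + |s u i|)
        (fun i _ => by positivity) (Finset.mem_univ i)
    have h2 := hC₀ u hu
    rw [Real.norm_eq_abs] at h2
    have h3 : G u ≤ |G u| := le_abs_self _
    have h4 : C₀ ≤ A := le_max_left _ _
    linarith
  have hAx : ∀ u ∈ Set.Icc (0:ℝ) T, ∀ k i, |x k u i| ≤ A := by
    intro u hu k i
    have h1 : |x k u i| ≤ ∑ k', |x k' u i| :=
      Finset.single_le_sum (f := fun k' => |x k' u i|) (fun _ _ => abs_nonneg _) (Finset.mem_univ k)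
    have h2 := hGle u hu i
    have h3 := abs_nonneg (s u i)
    linarith
  have hAs : ∀ u ∈ Set.Icc (0:ℝ) T, ∀ i, |s u i| ≤ A := by
    intro u hu i
    have h2 := hGle u hu i
    have h3 : 0 ≤ ∑ k, |x k u i| := Finset.sum_nonneg fun _ _ => abs_nonneg _
    linarith
  -- bounds on B and d
  set b := 1 + ∑ k : Fin 3, ∑ i, ∑ j, B k i j with hbdef
  have hsumB : ∀ (k : Fin 3), 0 ≤ ∑ i, ∑ j, B k i j :=
    fun k => Finset.sum_nonneg fun i _ => Finset.sum_nonneg fun j _ => hB k i j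
  have hbrow : ∀ k i, (∑ j, B k i j) ≤ b := by
    intro k i
    have h1 : (∑ j, B k i j) ≤ ∑ i, ∑ j, B k i j :=
      Finset.single_le_sum (fun i _ => Finset.sum_nonneg fun j _ => hB k i j) (Finset.mem_univ i)
    have h2 : (∑ i, ∑ j, B k i j) ≤ ∑ k' : Fin 3, ∑ i, ∑ j, B k' i j :=
      Finset.single_le_sum (fun k' _ => hsumB k') (Finset.mem_univ k)
    simp only [hbdef]; linarith
  have hb1 : (1:ℝ) ≤ b := by
    have := Finset.sum_nonneg (fun (k : Fin 3) (_ : k ∈ Finset.univ) => hsumB k)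
    simp only [hbdef]; linarith
  set D := 1 + ∑ k : Fin 3, ∑ i, d k i with hDdef
  have hD : ∀ k i, d k i ≤ D := by
    intro k i
    have h1 : d k i ≤ ∑ i, d k i :=
      Finset.single_le_sum (fun i _ => (hd k i).le) (Finset.mem_univ i)
    have h2 : (∑ i, d k i) ≤ ∑ k' : Fin 3, ∑ i, d k' i :=
      Finset.single_le_sum (fun k' _ => Finset.sum_nonneg fun i _ => (hd k' i).le)
        (Finset.mem_univ k)
    simp only [hDdef]; linarith
  have hD1 : (1:ℝ) ≤ D := by
    have : (0:ℝ) ≤ ∑ k : Fin 3, ∑ i, d k i :=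
      Finset.sum_nonneg fun k _ => Finset.sum_nonneg fun i _ => (hd k i).le
    simp only [hDdef]; linarith
  -- Lyapunov-type violation functional
  set V : ℝ → ℝ := fun u =>
    (∑ k : Fin 3, ∑ i, (min (x k u i) 0)^2) + ∑ i, (min (s u i) 0)^2 with hVdef
  set W : ℝ → ℝ := fun u =>
    (∑ k : Fin 3, ∑ i, 2 * min (x k u i) 0 * F k u i)
      + ∑ i, 2 * min (s u i) 0 * (-(F 0 u i + F 1 u i + F 2 u i)) with hWdef
  have hV0 : ∀ u, 0 ≤ V u := by
    intro u; simp only [hVdef]; positivity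
  have hVi : V 0 = 0 := by
    have e1 : ∀ (k : Fin 3) i, min (x k 0 i) 0 = 0 := fun k i => min_eq_right (h0 k i)
    have e2 : ∀ i, min (s 0 i) 0 = 0 := by
      intro i
      apply min_eq_right
      simp only [hsdef]; linarith [h0' i]
    simp only [hVdef]
    simp [e1, e2]
  have hxV : ∀ u k j, (min (x k u j) 0)^2 ≤ V u := by
    intro u k j
    have h1 : (min (x k u j) 0)^2 ≤ ∑ i, (min (x k u i) 0)^2 :=
      Finset.single_le_sum (f := fun i => (min (x k u i) 0)^2) (fun i _ => sq_nonneg _) (Finset.mem_univ j)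
    have h2 : (∑ i, (min (x k u i) 0)^2) ≤ ∑ k' : Fin 3, ∑ i, (min (x k' u i) 0)^2 :=
      Finset.single_le_sum (f := fun k' => ∑ i, (min (x k' u i) 0)^2)
        (fun k' _ => Finset.sum_nonneg fun i _ => sq_nonneg _) (Finset.mem_univ k)
    have h3 : (0:ℝ) ≤ ∑ i, (min (s u i) 0)^2 := Finset.sum_nonneg fun i _ => sq_nonneg _
    simp only [hVdef]; linarith
  have hsV : ∀ u i, (min (s u i) 0)^2 ≤ V u := by
    intro u i
    have h1 : (min (s u i) 0)^2 ≤ ∑ i', (min (s u i') 0)^2 :=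
      Finset.single_le_sum (f := fun i' => (min (s u i') 0)^2) (fun i' _ => sq_nonneg _) (Finset.mem_univ i)
    have h2 : (0:ℝ) ≤ ∑ k : Fin 3, ∑ i, (min (x k u i) 0)^2 :=
      Finset.sum_nonneg fun k _ => Finset.sum_nonneg fun i _ => sq_nonneg _
    simp only [hVdef]; linarith
  -- derivative of V
  have hVd : ∀ u, HasDerivAt V (W u) u := by
    intro u
    have h1 : ∀ (k : Fin 3) (i : Fin n), HasDerivAt (fun u => (min (x k u i) 0)^2)
        (2 * min (x k u i) 0 * F k u i) u :=
      fun k i => by have := (hasDerivAt_q (x k u i)).comp u (hxc k u i); exact this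
    have h2 : ∀ i : Fin n, HasDerivAt (fun u => (min (s u i) 0)^2)
        (2 * min (s u i) 0 * (-(F 0 u i + F 1 u i + F 2 u i))) u :=
      fun i => by have := (hasDerivAt_q (s u i)).comp u (hsc u i); exact this
    have h3 := HasDerivAt.fun_sum
      (fun (k : Fin 3) (_ : k ∈ Finset.univ) => HasDerivAt.fun_sum
        (fun (i : Fin n) (_ : i ∈ Finset.univ) => h1 k i))
    have h4 := HasDerivAt.fun_sum (fun (i : Fin n) (_ : i ∈ Finset.univ) => h2 i)
    exact h3.add h4
  -- |g| bound
  have hgabs : ∀ u ∈ Set.Icc (0:ℝ) T, ∀ k i, |g k u i| ≤ b * A := by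
    intro u hu k i
    simp only [hgdef]
    calc |∑ j, B k i j * x k u j| ≤ ∑ j, |B k i j * x k u j| :=
          Finset.abs_sum_le_sum_abs _ _
      _ = ∑ j, B k i j * |x k u j| := Finset.sum_congr rfl fun j _ => by
          rw [abs_mul, abs_of_nonneg (hB k i j)]
      _ ≤ ∑ j, B k i j * A := Finset.sum_le_sum fun j _ =>
          mul_le_mul_of_nonneg_left (hAx u hu k j) (hB k i j)
      _ = (∑ j, B k i j) * A := by rw [Finset.sum_mul]
      _ ≤ b * A := mul_le_mul_of_nonneg_right (hbrow k i) hA0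
  -- Claim A
  have claimA : ∀ u ∈ Set.Icc (0:ℝ) T, ∀ k i,
      2 * min (x k u i) 0 * F k u i ≤ (4*A*b) * V u := by
    intro u hu k i
    have hm0 : min (x k u i) 0 ≤ 0 := min_le_right _ _
    have hσ0 : min (s u i) 0 ≤ 0 := min_le_right _ _
    have hp0 : (0:ℝ) ≤ max (s u i) 0 := le_max_right _ _
    have hpA : max (s u i) 0 ≤ A := max_le ((le_abs_self _).trans (hAs u hu i)) hA0
    have hsp : s u i = min (s u i) 0 + max (s u i) 0 := by simpa using min_add_max (s u i) 0
    have hgub : g k u i ≤ b * A := (le_abs_self _).trans (hgabs u hu k i)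
    have hglb : -(b*A) ≤ g k u i := (abs_le.1 (hgabs u hu k i)).1
    have hgl2 : (∑ j, B k i j * min (x k u j) 0) ≤ g k u i := by
      simp only [hgdef]
      exact Finset.sum_le_sum fun j _ =>
        mul_le_mul_of_nonneg_left (min_le_left _ _) (hB k i j)
    have hmm : min (x k u i) 0 * x k u i = (min (x k u i) 0)^2 := min_mul_self' _
    have hmV : (min (x k u i) 0)^2 ≤ V u := hxV u k i
    have hσV : (min (s u i) 0)^2 ≤ V u := hsV u i
    have hba0 : (0:ℝ) ≤ b * A := by positivity
    have e1 : 2 * min (x k u i) 0 * F k u i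
        = -(2*(d k i))*(min (x k u i) 0 * x k u i)
          + 2*((min (x k u i) 0)*(min (s u i) 0))*(g k u i)
          + 2*((min (x k u i) 0)*(max (s u i) 0))*(g k u i) := by
      simp only [hFdef]
      linear_combination (2 * min (x k u i) 0 * g k u i) * hsp
    rw [hmm] at e1
    have b1 : -(2*(d k i))*((min (x k u i) 0)^2) ≤ 0 := by
      nlinarith [sq_nonneg (min (x k u i) 0), hd k i]
    have b2 : 2*((min (x k u i) 0)*(min (s u i) 0))*(g k u i) ≤ (2*A*b) * V u := by
      have hmσ0 : 0 ≤ (min (x k u i) 0)*(min (s u i) 0) :=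
        mul_nonneg_of_nonpos_nonpos hm0 hσ0
      have h1 : ((min (x k u i) 0)*(min (s u i) 0)) * g k u i
          ≤ ((min (x k u i) 0)*(min (s u i) 0)) * (b*A) :=
        mul_le_mul_of_nonneg_left hgub hmσ0
      have h3 : 2*((min (x k u i) 0)*(min (s u i) 0))
          ≤ (min (x k u i) 0)^2 + (min (s u i) 0)^2 := by
        nlinarith [sq_nonneg (min (x k u i) 0 - min (s u i) 0)]
      have h4 : (2*((min (x k u i) 0)*(min (s u i) 0)))*(b*A)
          ≤ ((min (x k u i) 0)^2 + (min (s u i) 0)^2)*(b*A) :=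
        mul_le_mul_of_nonneg_right h3 hba0
      have h5 : ((min (x k u i) 0)^2 + (min (s u i) 0)^2)*(b*A) ≤ (2*V u)*(b*A) :=
        mul_le_mul_of_nonneg_right (by linarith) hba0
      linarith [h1, h4, h5]
    have b3 : 2*((min (x k u i) 0)*(max (s u i) 0))*(g k u i) ≤ (2*A*b) * V u := by
      have hmp0 : (min (x k u i) 0) * (max (s u i) 0) ≤ 0 :=
        mul_nonpos_iff.2 (Or.inr ⟨hm0, hp0⟩)
      have s1 : ((min (x k u i) 0) * (max (s u i) 0)) * g k u i
          ≤ ((min (x k u i) 0) * (max (s u i) 0)) * (∑ j, B k i j * min (x k u j) 0) :=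
        mul_le_mul_of_nonpos_left hgl2 hmp0
      have s2 : ((min (x k u i) 0) * (max (s u i) 0)) * (∑ j, B k i j * min (x k u j) 0)
          = ∑ j, B k i j * ((max (s u i) 0) * ((min (x k u i) 0) * min (x k u j) 0)) := by
        rw [Finset.mul_sum]
        exact Finset.sum_congr rfl fun j _ => by ring
      have s3 : ∀ j, B k i j * ((max (s u i) 0) * ((min (x k u i) 0) * min (x k u j) 0))
          ≤ B k i j * (A * V u) := by
        intro j
        apply mul_le_mul_of_nonneg_left _ (hB k i j)
        have hmmj : 0 ≤ (min (x k u i) 0) * min (x k u j) 0 :=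
          mul_nonneg_of_nonpos_nonpos hm0 (min_le_right _ _)
        have h1 : (max (s u i) 0) * ((min (x k u i) 0) * min (x k u j) 0)
            ≤ A * ((min (x k u i) 0) * min (x k u j) 0) :=
          mul_le_mul_of_nonneg_right hpA hmmj
        have h2 : (min (x k u i) 0) * min (x k u j) 0 ≤ V u := by
          nlinarith [sq_nonneg (min (x k u i) 0 - min (x k u j) 0), hxV u k i, hxV u k j]
        have h3 : A * ((min (x k u i) 0) * min (x k u j) 0) ≤ A * V u :=
          mul_le_mul_of_nonneg_left h2 hA0
        linarith
      have s4 : (∑ j, B k i j * (A * V u)) = (∑ j, B k i j) * (A * V u) :=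
        (Finset.sum_mul _ _ _).symm
      have s5 : (∑ j, B k i j) * (A * V u) ≤ b * (A * V u) :=
        mul_le_mul_of_nonneg_right (hbrow k i) (mul_nonneg hA0 (hV0 u))
      have s6 : (∑ j, B k i j * ((max (s u i) 0) * ((min (x k u i) 0) * min (x k u j) 0)))
          ≤ ∑ j, B k i j * (A * V u) := Finset.sum_le_sum fun j _ => s3 j
      have s7 : ((min (x k u i) 0) * (max (s u i) 0)) * g k u i ≤ b * (A * V u) := by
        rw [s2] at s1
        rw [s4] at s6
        linarith
      linarith [s7]
    linarith [b1, b2, b3, e1.le, e1.ge]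
  -- Claim B
  have claimB : ∀ u ∈ Set.Icc (0:ℝ) T, ∀ i,
      2 * min (s u i) 0 * (-(F 0 u i + F 1 u i + F 2 u i)) ≤ (6*D + 6*A*b) * V u := by
    intro u hu i
    have hσ0 : min (s u i) 0 ≤ 0 := min_le_right _ _
    have hσV : (min (s u i) 0)^2 ≤ V u := hsV u i
    have hσs : min (s u i) 0 * s u i = (min (s u i) 0)^2 := min_mul_self' _
    have hba0 : (0:ℝ) ≤ b * A := by positivity
    have hD0 : (0:ℝ) ≤ D := by linarith
    have hk : ∀ k, 2 * min (s u i) 0 * (d k i * x k u i - s u i * g k u i)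
        ≤ (2*D + 2*A*b) * V u := by
      intro k
      have hmV : (min (x k u i) 0)^2 ≤ V u := hxV u k i
      have hσm : min (s u i) 0 * x k u i ≤ min (s u i) 0 * min (x k u i) 0 :=
        mul_le_mul_of_nonpos_left (min_le_left _ _) hσ0
      have hσm0 : 0 ≤ min (s u i) 0 * min (x k u i) 0 :=
        mul_nonneg_of_nonpos_nonpos hσ0 (min_le_right _ _)
      have hglb : -(b*A) ≤ g k u i := (abs_le.1 (hgabs u hu k i)).1
      have p1 : 2 * min (s u i) 0 * (d k i * x k u i) ≤ 2*D*V u := by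
        have h1 : d k i * (min (s u i) 0 * x k u i)
            ≤ d k i * (min (s u i) 0 * min (x k u i) 0) :=
          mul_le_mul_of_nonneg_left hσm (hd k i).le
        have h2 : d k i * (min (s u i) 0 * min (x k u i) 0)
            ≤ D * (min (s u i) 0 * min (x k u i) 0) :=
          mul_le_mul_of_nonneg_right (hD k i) hσm0
        have h3 : 2*(min (s u i) 0 * min (x k u i) 0)
            ≤ (min (s u i) 0)^2 + (min (x k u i) 0)^2 := by
          nlinarith [sq_nonneg (min (s u i) 0 - min (x k u i) 0)]
        have h4 : D*(2*(min (s u i) 0 * min (x k u i) 0))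
            ≤ D*((min (s u i) 0)^2 + (min (x k u i) 0)^2) :=
          mul_le_mul_of_nonneg_left h3 hD0
        have h5 : D*((min (s u i) 0)^2 + (min (x k u i) 0)^2) ≤ D*(2*V u) :=
          mul_le_mul_of_nonneg_left (by linarith) hD0
        linarith [h1, h2, h4, h5]
      have p2 : 2 * min (s u i) 0 * (-(s u i * g k u i)) ≤ 2*A*b*V u := by
        have e : 2 * min (s u i) 0 * (-(s u i * g k u i))
            = 2 * ((min (s u i) 0)^2) * (-(g k u i)) := by
          linear_combination (-2 * g k u i) * hσs
        have h1 : ((min (s u i) 0)^2) * (-(g k u i)) ≤ ((min (s u i) 0)^2) * (b*A) :=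
          mul_le_mul_of_nonneg_left (by linarith) (sq_nonneg _)
        have h2 : ((min (s u i) 0)^2) * (b*A) ≤ V u * (b*A) :=
          mul_le_mul_of_nonneg_right hσV hba0
        linarith [h1, h2, e.le, e.ge]
      have e3 : 2 * min (s u i) 0 * (d k i * x k u i - s u i * g k u i)
          = 2 * min (s u i) 0 * (d k i * x k u i)
            + 2 * min (s u i) 0 * (-(s u i * g k u i)) := by ring
      linarith [p1, p2, e3.le, e3.ge]
    have e2 : 2 * min (s u i) 0 * (-(F 0 u i + F 1 u i + F 2 u i))
        = (2 * min (s u i) 0 * (d 0 i * x 0 u i - s u i * g 0 u i))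
          + (2 * min (s u i) 0 * (d 1 i * x 1 u i - s u i * g 1 u i))
          + (2 * min (s u i) 0 * (d 2 i * x 2 u i - s u i * g 2 u i)) := by
      simp only [hFdef]; ring
    linarith [hk 0, hk 1, hk 2, e2.le, e2.ge]
  -- combine
  have hWle : ∀ u ∈ Set.Icc (0:ℝ) T,
      W u ≤ (3*(n:ℝ)*(4*A*b) + (n:ℝ)*(6*D+6*A*b)) * V u := by
    intro u hu
    have h1 : (∑ k : Fin 3, ∑ i, 2 * min (x k u i) 0 * F k u i)
        ≤ ∑ _k : Fin 3, ∑ _i : Fin n, (4*A*b) * V u :=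
      Finset.sum_le_sum fun k _ => Finset.sum_le_sum fun i _ => claimA u hu k i
    have h2 : (∑ i, 2 * min (s u i) 0 * (-(F 0 u i + F 1 u i + F 2 u i)))
        ≤ ∑ _i : Fin n, (6*D+6*A*b) * V u :=
      Finset.sum_le_sum fun i _ => claimB u hu i
    have h4 : (∑ _k : Fin 3, ∑ _i : Fin n, (4*A*b) * V u)
        + (∑ _i : Fin n, (6*D+6*A*b) * V u)
        = (3*(n:ℝ)*(4*A*b) + (n:ℝ)*(6*D+6*A*b)) * V u := by
      simp [Finset.sum_const, Finset.card_univ, nsmul_eq_mul]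
      ring
    simp only [hWdef]
    linarith
  have hVT : V T = 0 := gronwall_zero V W T _ hT hVd hV0 hVi hWle
  constructor
  · intro k i
    have h1 : (min (x k T i) 0)^2 = 0 :=
      le_antisymm (hVT ▸ hxV T k i) (sq_nonneg _)
    exact nonneg_of_min_sq_zero h1
  · intro i
    have h1 : (min (s T i) 0)^2 = 0 := le_antisymm (hVT ▸ hsV T i) (sq_nonneg _)
    have h2 : 0 ≤ s T i := nonneg_of_min_sq_zero h1
    simp only [hsdef] at h2
    linarith

/-- The set `𝒟` is positively invariant under the tri-virus
SIS dynamics. -/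
theorem stmt_4 {n : ℕ}
    (d1 d2 d3 : Fin n → ℝ) (hd1 : ∀ i, 0 < d1 i) (hd2 : ∀ i, 0 < d2 i)
    (hd3 : ∀ i, 0 < d3 i)
    (B1 B2 B3 : Matrix (Fin n) (Fin n) ℝ)
    (hB1 : ∀ i j, 0 ≤ B1 i j) (hB2 : ∀ i j, 0 ≤ B2 i j) (hB3 : ∀ i j, 0 ≤ B3 i j)
    (x1 x2 x3 : ℝ → Fin n → ℝ)
    (hx1 : ∀ t, HasDerivAt x1
      ((-(Matrix.diagonal d1) +
        (1 - Matrix.diagonal (x1 t + x2 t + x3 t)) * B1).mulVec (x1 t)) t)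
    (hx2 : ∀ t, HasDerivAt x2
      ((-(Matrix.diagonal d2) +
        (1 - Matrix.diagonal (x1 t + x2 t + x3 t)) * B2).mulVec (x2 t)) t)
    (hx3 : ∀ t, HasDerivAt x3
      ((-(Matrix.diagonal d3) +
        (1 - Matrix.diagonal (x1 t + x2 t + x3 t)) * B3).mulVec (x3 t)) t)
    (h0 : inDomain (x1 0) (x2 0) (x3 0)) :
    ∀ t ≥ (0 : ℝ), inDomain (x1 t) (x2 t) (x3 t) := by
  intro t ht
  obtain ⟨h01, h02, h03, h0s⟩ := h0
  have hmain := key (n := n) ![d1, d2, d3] (by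
      intro k i; fin_cases k <;> simp [hd1 i, hd2 i, hd3 i])
    ![B1, B2, B3] (by
      intro k i j; fin_cases k <;> simp [hB1 i j, hB2 i j, hB3 i j])
    ![x1, x2, x3] (by
      intro k u
      fin_cases k <;>
        simp only [Matrix.cons_val_zero, Matrix.cons_val_one, Matrix.head_cons,
          Matrix.cons_val_two, Matrix.tail_cons, Fin.isValue] <;>
        [exact hx1 u; exact hx2 u; exact hx3 u])
    (by
      intro k i; fin_cases k <;> simp [(h01 i).1, (h02 i).1, (h03 i).1])
    (by intro i; simpa using h0s i)
    t ht
  obtain ⟨hpos, hsum⟩ := hmain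
  have p1 := hpos 0
  have p2 := hpos 1
  have p3 := hpos 2
  simp only [Matrix.cons_val_zero, Matrix.cons_val_one, Matrix.head_cons,
    Matrix.cons_val_two, Matrix.tail_cons, Fin.isValue] at p1 p2 p3 hsum
  refine ⟨fun i => ⟨p1 i, ?_⟩, fun i => ⟨p2 i, ?_⟩, fun i => ⟨p3 i, ?_⟩, hsum⟩ <;>
    · have := hsum i; have := p1 i; have := p2 i; have := p3 i; linarith
end

section
/- Let D be a positive diagonal n×n matrix and B a nonnegative irreducible n×n matrix with s(B - D) > 0. If x̃ satisfies 0 ≪ x̃ ≪ 1 (entrywise) and (-D + (I - diag(x̃)) B) x̃ = 0, then x̃ is, up to positive scaling, the unique strictly positive eigenvector of the Metzler matrix -D + (I - diag(x̃)) B, it corresponds to the eigenvalue with largest real part, and s(-D + (I - diag(x̃)) B) = 0. -/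
open Matrix

section aux

variable {n : ℕ}

/-- If `w ≤ c • x` type comparison: key Collatz–Wielandt style bound. -/
lemma key_bound [Nonempty (Fin n)] (M : Matrix (Fin n) (Fin n) ℝ)
    (hM : ∀ i j, 0 ≤ M i j) (x : Fin n → ℝ) (hx : ∀ i, 0 < x i) (t : ℝ)
    (hMx : M.mulVec x = t • x) (w : Fin n → ℝ) (hw : ∀ i, 0 ≤ w i)
    (hw0 : ∃ i, 0 < w i) (s : ℝ) (hle : ∀ i, s * w i ≤ M.mulVec w i) : s ≤ t := by
  obtain ⟨i0, -, hmax⟩ := Finset.exists_max_image Finset.univ (fun i => w i / x i)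
    Finset.univ_nonempty
  set c := w i0 / x i0 with hc
  have hwc : ∀ i, w i ≤ c * x i := by
    intro i
    have h1 : w i / x i ≤ c := hmax i (Finset.mem_univ i)
    calc w i = (w i / x i) * x i := (div_mul_cancel₀ _ (hx i).ne').symm
    _ ≤ c * x i := by nlinarith [hx i]
  have hcpos : 0 < c := by
    obtain ⟨j, hj⟩ := hw0
    have : w j / x j ≤ c := hmax j (Finset.mem_univ j)
    have : 0 < w j / x j := div_pos hj (hx j)
    linarith
  have hwi0 : w i0 = c * x i0 := (div_mul_cancel₀ _ (hx i0).ne').symm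
  have h2 : M.mulVec w i0 ≤ c * (t * x i0) := by
    have : M.mulVec w i0 ≤ M.mulVec (c • x) i0 := by
      unfold Matrix.mulVec dotProduct
      apply Finset.sum_le_sum
      intro j _
      have := hwc j
      have := hM i0 j
      simp only [Pi.smul_apply, smul_eq_mul]
      nlinarith
    rw [Matrix.mulVec_smul, hMx] at this
    simpa using this
  have h3 : s * w i0 ≤ t * w i0 := by
    calc s * w i0 ≤ M.mulVec w i0 := hle i0
    _ ≤ c * (t * x i0) := h2
    _ = t * w i0 := by rw [hwi0]; ring
  have : 0 < w i0 := by rw [hwi0]; exact mul_pos hcpos (hx i0)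
  nlinarith

lemma uniq_vec [Nonempty (Fin n)] (M : Matrix (Fin n) (Fin n) ℝ)
    (hM : ∀ i j, 0 ≤ M i j)
    (hirr : ∀ S : Finset (Fin n), S.Nonempty → S ≠ Finset.univ →
      ∃ i ∈ S, ∃ j ∈ Sᶜ, M i j ≠ 0)
    (x : Fin n → ℝ) (hx : ∀ i, 0 < x i) (t : ℝ) (hMx : M.mulVec x = t • x)
    (y : Fin n → ℝ) (hy : ∀ i, 0 < y i) (hMy : M.mulVec y = t • y) :
    ∃ c : ℝ, 0 < c ∧ y = c • x := by
  classical
  obtain ⟨i0, -, hmin⟩ := Finset.exists_min_image Finset.univ (fun i => y i / x i)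
    Finset.univ_nonempty
  set c := y i0 / x i0 with hc
  have hcpos : 0 < c := div_pos (hy i0) (hx i0)
  refine ⟨c, hcpos, ?_⟩
  set z : Fin n → ℝ := fun i => y i - c * x i with hz
  have hznn : ∀ i, 0 ≤ z i := by
    intro i
    have h1 : c ≤ y i / x i := hmin i (Finset.mem_univ i)
    have : c * x i ≤ (y i / x i) * x i := by nlinarith [hx i]
    have h2 : (y i / x i) * x i = y i := div_mul_cancel₀ _ (hx i).ne'
    simp only [hz]; nlinarith
  have hzi0 : z i0 = 0 := by
    have h2 : (y i0 / x i0) * x i0 = y i0 := div_mul_cancel₀ _ (hx i0).ne'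
    simp only [hz, hc]; linarith
  have hMz : M.mulVec z = t • z := by
    have : z = y - c • x := by funext i; simp [hz]
    rw [this, Matrix.mulVec_sub, Matrix.mulVec_smul, hMx, hMy]
    funext i; simp; ring
  -- show z = 0
  have hz0 : ∀ i, z i = 0 := by
    by_contra hcon
    push_neg at hcon
    set S : Finset (Fin n) := Finset.univ.filter (fun i => z i = 0) with hS
    have hSne : S.Nonempty := ⟨i0, by simp [hS, hzi0]⟩
    have hSproper : S ≠ Finset.univ := by
      obtain ⟨j, hj⟩ := hcon
      intro h
      have : j ∈ S := h ▸ Finset.mem_univ j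
      simp [hS] at this
      exact hj this
    obtain ⟨i, hiS, j, hjS, hMij⟩ := hirr S hSne hSproper
    have hzi : z i = 0 := by simp [hS] at hiS; exact hiS
    have hzj : 0 < z j := by
      simp [hS] at hjS
      exact lt_of_le_of_ne (hznn j) (Ne.symm hjS)
    have hpos : 0 < M.mulVec z i := by
      unfold Matrix.mulVec dotProduct
      have h1 : ∀ k ∈ Finset.univ, 0 ≤ M i k * z k := fun k _ =>
        mul_nonneg (hM i k) (hznn k)
      have h2 : 0 < M i j * z j :=
        mul_pos (lt_of_le_of_ne (hM i j) (Ne.symm hMij)) hzj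
      calc (0:ℝ) < M i j * z j := h2
      _ ≤ ∑ k, M i k * z k := Finset.single_le_sum h1 (Finset.mem_univ j)
    rw [hMz] at hpos
    simp [hzi] at hpos
  funext i
  have := hz0 i
  simp only [hz] at this
  simp only [Pi.smul_apply, smul_eq_mul]
  linarith

end aux

theorem stmt_5' {n : ℕ} (d : Fin n → ℝ) (hd : ∀ i, 0 < d i)
    (B : Matrix (Fin n) (Fin n) ℝ) (hB : ∀ i j, 0 ≤ B i j)
    (hBirr : ∀ S : Finset (Fin n), S.Nonempty → S ≠ Finset.univ → ∃ i ∈ S, ∃ j ∈ Sᶜ, B i j ≠ 0)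
    (hs : 0 < sSup (Complex.re '' spectrum ℂ ((B - Matrix.diagonal d).map (algebraMap ℝ ℂ))))
    (x : Fin n → ℝ) (hx : ∀ i, 0 < x i ∧ x i < 1)
    (heq : (-(Matrix.diagonal d) + (1 - Matrix.diagonal x) * B).mulVec x = 0) :
    sSup (Complex.re '' spectrum ℂ
        ((-(Matrix.diagonal d) + (1 - Matrix.diagonal x) * B).map (algebraMap ℝ ℂ))) = 0 ∧
      ∀ (y : Fin n → ℝ) (μ : ℝ), (∀ i, 0 < y i) →
        (-(Matrix.diagonal d) + (1 - Matrix.diagonal x) * B).mulVec y = μ • y →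
        μ = 0 ∧ ∃ c : ℝ, 0 < c ∧ y = c • x := by
  classical
  -- rule out n = 0
  rcases isEmpty_or_nonempty (Fin n) with hemp | hne
  · exfalso
    have : spectrum ℂ ((B - Matrix.diagonal d).map (algebraMap ℝ ℂ)) = ∅ := by
      ext z
      simp only [Set.mem_empty_iff_false, iff_false]
      intro hz
      exact (spectrum.mem_iff.mp hz) (isUnit_of_subsingleton _)
    rw [this] at hs
    simp [Real.sSup_empty] at hs
  set A : Matrix (Fin n) (Fin n) ℝ := -(Matrix.diagonal d) + (1 - Matrix.diagonal x) * B with hA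
  have hdiagx : (1 : Matrix (Fin n) (Fin n) ℝ) - Matrix.diagonal x
      = Matrix.diagonal (fun i => 1 - x i) := by
    rw [← Matrix.diagonal_one, ← Matrix.diagonal_sub]
  have hAij : ∀ i j, i ≠ j → A i j = (1 - x i) * B i j := by
    intro i j hij
    simp [hA, hdiagx, Matrix.diagonal_mul, Matrix.diagonal_apply_ne _ hij]
  have hAii : ∀ i, A i i = -(d i) + (1 - x i) * B i i := by
    intro i
    simp [hA, hdiagx, Matrix.diagonal_mul]
  set t : ℝ := ∑ i, d i with ht
  have htd : ∀ i, d i ≤ t := fun i =>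
    Finset.single_le_sum (fun j _ => (hd j).le) (Finset.mem_univ i)
  have htpos : 0 < t := lt_of_lt_of_le (hd (Classical.arbitrary _)) (htd _)
  set M : Matrix (Fin n) (Fin n) ℝ := A + t • (1 : Matrix (Fin n) (Fin n) ℝ) with hM
  have hMij : ∀ i j, M i j = A i j + if i = j then t else 0 := by
    intro i j
    simp [hM, Matrix.one_apply, mul_ite]
  have hMnn : ∀ i j, 0 ≤ M i j := by
    intro i j
    rcases eq_or_ne i j with rfl | hij
    · rw [hMij, if_pos rfl]
      have := hAii i
      have h1 : 0 ≤ (1 - x i) * B i i := mul_nonneg (by linarith [(hx i).2]) (hB i i)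
      have := htd i
      linarith
    · rw [hMij, if_neg hij, hAij i j hij]
      have h1 : 0 ≤ (1 - x i) * B i j := mul_nonneg (by linarith [(hx i).2]) (hB i j)
      linarith
  have hMirr : ∀ S : Finset (Fin n), S.Nonempty → S ≠ Finset.univ →
      ∃ i ∈ S, ∃ j ∈ Sᶜ, M i j ≠ 0 := by
    intro S hS1 hS2
    obtain ⟨i, hi, j, hj, hBij⟩ := hBirr S hS1 hS2
    have hij : i ≠ j := by
      intro h; rw [Finset.mem_compl] at hj; exact hj (h ▸ hi)
    refine ⟨i, hi, j, hj, ?_⟩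
    rw [hMij, if_neg hij, hAij i j hij]
    have : 0 < 1 - x i := by linarith [(hx i).2]
    intro h
    rcases mul_eq_zero.mp (by linarith [h] : (1 - x i) * B i j = 0) with h' | h'
    · linarith
    · exact hBij h'
  have hMx : M.mulVec x = t • x := by
    rw [hM, Matrix.add_mulVec, heq, Matrix.smul_mulVec, Matrix.one_mulVec]
    simp
  have hxpos : ∀ i, 0 < x i := fun i => (hx i).1
  -- Part 2: eigenvector uniqueness
  have part2 : ∀ (y : Fin n → ℝ) (μ : ℝ), (∀ i, 0 < y i) →
      A.mulVec y = μ • y → μ = 0 ∧ ∃ c : ℝ, 0 < c ∧ y = c • x := by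
    intro y μ hy hAy
    have hMy : M.mulVec y = (μ + t) • y := by
      rw [hM, Matrix.add_mulVec, hAy, Matrix.smul_mulVec, Matrix.one_mulVec]
      funext i; simp; ring
    have h1 : μ + t ≤ t := by
      apply key_bound M hMnn x hxpos t hMx y (fun i => (hy i).le) ⟨_, hy (Classical.arbitrary _)⟩
      intro i
      rw [hMy]; simp
    have h2 : t ≤ μ + t := by
      apply key_bound M hMnn y hy (μ + t) hMy x (fun i => (hxpos i).le)
        ⟨_, hxpos (Classical.arbitrary _)⟩
      intro i
      rw [hMx]; simp
    have hμ : μ = 0 := by linarith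
    refine ⟨hμ, ?_⟩
    apply uniq_vec M hMnn hMirr x hxpos t hMx y hy
    rw [hMy, hμ]; simp
  refine ⟨?_, part2⟩
  -- Part 1: spectral abscissa is 0
  have hbound : ∀ z ∈ spectrum ℂ (A.map (algebraMap ℝ ℂ)), z.re ≤ 0 := by
    intro z hz
    rw [spectrum.mem_iff, Algebra.algebraMap_eq_smul_one] at hz
    have hdet : (z • (1 : Matrix (Fin n) (Fin n) ℂ) - A.map (algebraMap ℝ ℂ)).det = 0 := by
      by_contra h
      exact hz ((Matrix.isUnit_iff_isUnit_det _).mpr (isUnit_iff_ne_zero.mpr h))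
    obtain ⟨v, hv0, hv⟩ := (Matrix.exists_mulVec_eq_zero_iff).mpr hdet
    have hAv : (A.map (algebraMap ℝ ℂ)).mulVec v = z • v := by
      rw [Matrix.sub_mulVec, Matrix.smul_mulVec, Matrix.one_mulVec, sub_eq_zero] at hv
      exact hv.symm
    set w : Fin n → ℝ := fun i => ‖v i‖ with hw
    have hwnn : ∀ i, 0 ≤ w i := fun i => norm_nonneg _
    have hwpos : ∃ i, 0 < w i := by
      by_contra h
      push_neg at h
      apply hv0
      funext i
      have := le_antisymm (h i) (hwnn i)
      exact norm_eq_zero.mp this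
    have hkey : ∀ i, ‖z + t‖ * w i ≤ M.mulVec w i := by
      intro i
      have hMv : (z + t) * v i = ∑ j, (M i j : ℂ) * v j := by
        have h1 : ((A.map (algebraMap ℝ ℂ)).mulVec v) i = z * v i := by
          rw [hAv]; simp
        have h2 : ((A.map (algebraMap ℝ ℂ)).mulVec v) i = ∑ j, (A i j : ℂ) * v j := by
          simp [Matrix.mulVec, dotProduct, Matrix.map_apply]
        have h3 : ∑ j, (M i j : ℂ) * v j
            = (∑ j, (A i j : ℂ) * v j) + t * v i := by
          have : ∀ j, (M i j : ℂ) * v j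
              = (A i j : ℂ) * v j + (if i = j then (t:ℂ) else 0) * v j := by
            intro j
            rw [hMij]
            split <;> push_cast <;> ring
          rw [Finset.sum_congr rfl (fun j _ => this j), Finset.sum_add_distrib]
          congr 1
          simp [Finset.sum_ite_eq]
        rw [h3, ← h2, h1]; ring
      calc ‖z + t‖ * w i = ‖(z + t) * v i‖ := by
            rw [norm_mul]
      _ = ‖∑ j, (M i j : ℂ) * v j‖ := by rw [hMv]
      _ ≤ ∑ j, ‖(M i j : ℂ) * v j‖ := norm_sum_le _ _
      _ = ∑ j, M i j * w j := by
            apply Finset.sum_congr rfl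
            intro j _
            rw [norm_mul]
            simp [hw, Complex.norm_real, abs_of_nonneg (hMnn i j)]
      _ = M.mulVec w i := by simp [Matrix.mulVec, dotProduct]
    have habs : ‖z + t‖ ≤ t :=
      key_bound M hMnn x hxpos t hMx w hwnn hwpos _ hkey
    have hre : (z + t).re ≤ ‖z + t‖ := Complex.re_le_norm _
    have : (z + (t:ℂ)).re = z.re + t := by simp
    linarith
  have hmem : (0:ℂ) ∈ spectrum ℂ (A.map (algebraMap ℝ ℂ)) := by
    rw [spectrum.zero_mem_iff ℂ]
    intro h
    have hdet := (Matrix.isUnit_iff_isUnit_det _).mp h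
    have hAdet : A.det = 0 := by
      rw [← Matrix.exists_mulVec_eq_zero_iff]
      refine ⟨x, ?_, heq⟩
      intro h'
      have := congrFun h' (Classical.arbitrary (Fin n))
      simp only [Pi.zero_apply] at this
      exact (hxpos _).ne' this
    have hdm : (A.map (algebraMap ℝ ℂ)).det = (algebraMap ℝ ℂ) A.det :=
      (RingHom.map_det _ _).symm
    rw [hdm, hAdet, map_zero] at hdet
    exact hdet.ne_zero rfl
  apply le_antisymm
  · apply Real.sSup_le
    · rintro r ⟨z, hz, rfl⟩
      exact hbound z hz
    · exact le_refl 0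
  · apply le_csSup
    · exact ⟨0, by rintro r ⟨z, hz, rfl⟩; exact hbound z hz⟩
    · exact ⟨0, hmem, by simp⟩


/-- If `x̃` with `0 ≪ x̃ ≪ 1` satisfies the single-virus endemic
equilibrium equation, then `x̃` is, up to positive scaling, the unique strictly
positive eigenvector of the Metzler matrix `-D + (I - diag(x̃))B`, its eigenvalue
is `0`, and `s(-D + (I - diag(x̃))B) = 0`. -/

theorem stmt_5 {n : ℕ} (d : Fin n → ℝ) (hd : ∀ i, 0 < d i)
    (B : Matrix (Fin n) (Fin n) ℝ) (hB : ∀ i j, 0 ≤ B i j) (hBirr : IrreducibleMat B)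
    (hs : 0 < spectralAbscissa (B - Matrix.diagonal d))
    (x : Fin n → ℝ) (hx : ∀ i, 0 < x i ∧ x i < 1)
    (heq : (-(Matrix.diagonal d) + (1 - Matrix.diagonal x) * B).mulVec x = 0) :
    spectralAbscissa (-(Matrix.diagonal d) + (1 - Matrix.diagonal x) * B) = 0 ∧
      ∀ (y : Fin n → ℝ) (μ : ℝ), (∀ i, 0 < y i) →
        (-(Matrix.diagonal d) + (1 - Matrix.diagonal x) * B).mulVec y = μ • y →
        μ = 0 ∧ ∃ c : ℝ, 0 < c ∧ y = c • x := by
  have h := stmt_5' d hd B hB hBirr (by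
    simpa [spectralAbscissa, specSet] using hs) x hx heq
  exact ⟨by simpa [spectralAbscissa, specSet] using h.1, h.2⟩
end

section
/- Let Q be a singular irreducible M-matrix of size n, with right null vector x̃ ≫ 0 and left null vector ũ ≫ 0 normalized so that ũᵀ x̃ = 1. Define P = diag(ũ₁/x̃₁, …, ũₙ/x̃ₙ). Then Q̄ := P Q + Qᵀ P is positive semidefinite, Q̄ x̃ = 0, and the null space of Q̄ is exactly the span of x̃ (so Q̄ has rank n - 1). -/
open Matrix

/-- For a singular irreducible M-matrix `Q` with right null vector
`x̃ ≫ 0` and left null vector `ũ ≫ 0` normalized so `ũᵀx̃ = 1`, and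
`P = diag(ũᵢ/x̃ᵢ)`, the matrix `Q̄ = PQ + QᵀP` is positive semidefinite,
`Q̄ x̃ = 0`, its null space is exactly the span of `x̃`, and its rank is `n-1`. -/
theorem stmt_11 {n : ℕ} (Q : Matrix (Fin n) (Fin n) ℝ)
    (hZ : ∀ i j, i ≠ j → Q i j ≤ 0) (hIrr : IrreducibleMat Q)
    (hM : ∀ z ∈ specSet Q, 0 ≤ z.re)
    (xt ut : Fin n → ℝ) (hx : ∀ i, 0 < xt i) (hu : ∀ i, 0 < ut i)
    (hright : Q.mulVec xt = 0) (hleft : Q.vecMul ut = 0)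
    (hnorm : ut ⬝ᵥ xt = 1)
    (P : Matrix (Fin n) (Fin n) ℝ) (hP : P = Matrix.diagonal (fun i => ut i / xt i))
    (Qbar : Matrix (Fin n) (Fin n) ℝ) (hQbar : Qbar = P * Q + Qᵀ * P) :
    Qbar.PosSemidef ∧ Qbar.mulVec xt = 0 ∧
      (∀ v : Fin n → ℝ, Qbar.mulVec v = 0 ↔ ∃ c : ℝ, v = c • xt) ∧
      Qbar.rank = n - 1 := by
  classical
  have hxne : ∀ i, xt i ≠ 0 := fun i => (hx i).ne'
  have hrow : ∀ i, ∑ j, Q i j * xt j = 0 := by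
    intro i
    have := congrFun hright i
    simpa [Matrix.mulVec, dotProduct] using this
  have hcol : ∀ j, ∑ i, ut i * Q i j = 0 := by
    intro j
    have := congrFun hleft j
    simpa [Matrix.vecMul, dotProduct] using this
  have hQb : ∀ i j, Qbar i j = ut i / xt i * Q i j + Q j i * (ut j / xt j) := by
    intro i j
    simp [hQbar, hP, Matrix.add_apply, Matrix.diagonal_mul, Matrix.mul_diagonal,
      Matrix.transpose_apply]
  -- key quadratic form identity
  have key : ∀ v : Fin n → ℝ,
      v ⬝ᵥ Qbar.mulVec v
        = ∑ i, ∑ j, (-(ut i * Q i j * xt j)) * (v i / xt i - v j / xt j) ^ 2 := by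
    intro v
    set c : Fin n → Fin n → ℝ := fun i j => ut i * Q i j * xt j with hc
    set w : Fin n → ℝ := fun i => v i / xt i with hw
    have hA : ∑ i, ∑ j, c i j * w i ^ 2 = 0 := by
      refine Finset.sum_eq_zero fun i _ => ?_
      have : ∑ j, c i j * w i ^ 2 = ut i * w i ^ 2 * ∑ j, Q i j * xt j := by
        rw [Finset.mul_sum]
        exact Finset.sum_congr rfl fun j _ => by simp only [hc]; ring
      rw [this, hrow i, mul_zero]
    have hC : ∑ i, ∑ j, c i j * w j ^ 2 = 0 := by
      rw [Finset.sum_comm]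
      refine Finset.sum_eq_zero fun j _ => ?_
      have : ∑ i, c i j * w j ^ 2 = xt j * w j ^ 2 * ∑ i, ut i * Q i j := by
        rw [Finset.mul_sum]
        exact Finset.sum_congr rfl fun i _ => by simp only [hc]; ring
      rw [this, hcol j, mul_zero]
    have hLHS : v ⬝ᵥ Qbar.mulVec v = ∑ i, ∑ j, v i * Qbar i j * v j := by
      simp only [dotProduct, Matrix.mulVec, Finset.mul_sum]
      exact Finset.sum_congr rfl fun i _ => Finset.sum_congr rfl fun j _ => by ring
    have hterm : ∀ i j, v i * Qbar i j * v j
        = c i j * (w i * w j) + c j i * (w j * w i) := by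
      intro i j
      rw [hQb i j]
      have e1 : c i j * (w i * w j) = v i * (ut i / xt i * Q i j) * v j := by
        simp only [hc, hw]
        rw [show ut i * Q i j * xt j * (v i / xt i * (v j / xt j))
            = ut i / xt i * Q i j * v i * (v j / xt j * xt j) from by ring,
          div_mul_cancel₀ (v j) (hxne j)]
        ring
      have e2 : c j i * (w j * w i) = v i * (Q j i * (ut j / xt j)) * v j := by
        simp only [hc, hw]
        rw [show ut j * Q j i * xt i * (v j / xt j * (v i / xt i))
            = ut j / xt j * Q j i * v j * (v i / xt i * xt i) from by ring,
          div_mul_cancel₀ (v i) (hxne i)]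
        ring
      rw [e1, e2]
      ring
    have hB : ∑ i, ∑ j, v i * Qbar i j * v j = 2 * ∑ i, ∑ j, c i j * (w i * w j) := by
      calc ∑ i, ∑ j, v i * Qbar i j * v j
          = ∑ i, ∑ j, (c i j * (w i * w j) + c j i * (w j * w i)) :=
            Finset.sum_congr rfl fun i _ => Finset.sum_congr rfl fun j _ => hterm i j
        _ = (∑ i, ∑ j, c i j * (w i * w j)) + ∑ i, ∑ j, c j i * (w j * w i) := by
            simp [Finset.sum_add_distrib]
        _ = (∑ i, ∑ j, c i j * (w i * w j)) + ∑ j, ∑ i, c j i * (w j * w i) := by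
            rw [Finset.sum_comm]
        _ = 2 * ∑ i, ∑ j, c i j * (w i * w j) := by
            rw [two_mul]
    have hRHS : ∑ i, ∑ j, (-(c i j)) * (w i - w j) ^ 2
        = 2 * (∑ i, ∑ j, c i j * (w i * w j))
          - (∑ i, ∑ j, c i j * w i ^ 2) - ∑ i, ∑ j, c i j * w j ^ 2 := by
      simp only [← Finset.sum_sub_distrib, Finset.mul_sum]
      exact Finset.sum_congr rfl fun i _ => Finset.sum_congr rfl fun j _ => by ring
    rw [hLHS, hB, hRHS, hA, hC, sub_zero, sub_zero]
  -- nonnegativity of each summand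
  have hterm_nonneg : ∀ (v : Fin n → ℝ) i j,
      0 ≤ (-(ut i * Q i j * xt j)) * (v i / xt i - v j / xt j) ^ 2 := by
    intro v i j
    rcases eq_or_ne i j with rfl | hij
    · simp
    · have h1 : 0 ≤ -(ut i * Q i j * xt j) := by
        have h0 : 0 ≤ ut i * (-(Q i j)) * xt j :=
          mul_nonneg (mul_nonneg (hu i).le (neg_nonneg.mpr (hZ i j hij))) (hx j).le
        rw [show -(ut i * Q i j * xt j) = ut i * (-(Q i j)) * xt j from by ring]
        exact h0
      exact mul_nonneg h1 (sq_nonneg _)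
  have hquad_nonneg : ∀ v : Fin n → ℝ, 0 ≤ v ⬝ᵥ Qbar.mulVec v := by
    intro v
    rw [key v]
    exact Finset.sum_nonneg fun i _ => Finset.sum_nonneg fun j _ => hterm_nonneg v i j
  -- symmetry
  have hsymT : Qbarᵀ = Qbar := by
    rw [hQbar]
    have hPT : Pᵀ = P := by rw [hP, Matrix.diagonal_transpose]
    rw [Matrix.transpose_add, Matrix.transpose_mul, Matrix.transpose_mul,
      Matrix.transpose_transpose, hPT, add_comm]
  have hherm : Qbar.IsHermitian := by
    have : Qbarᴴ = Qbarᵀ := by ext i j; simp [Matrix.conjTranspose_apply]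
    unfold Matrix.IsHermitian
    rw [this, hsymT]
  -- Qbar xt = 0
  have hPxt : P.mulVec xt = ut := by
    funext i
    simp [hP, Matrix.mulVec_diagonal, div_mul_cancel₀ _ (hxne i)]
  have hQbarxt : Qbar.mulVec xt = 0 := by
    rw [hQbar, Matrix.add_mulVec, ← Matrix.mulVec_mulVec, ← Matrix.mulVec_mulVec,
      hright, hPxt, Matrix.mulVec_transpose, hleft]
    simp
  -- PSD
  have hPSD : Qbar.PosSemidef := by
    refine Matrix.PosSemidef.of_dotProduct_mulVec_nonneg hherm fun v => ?_
    simpa using hquad_nonneg v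
  -- null space
  have hiff : ∀ v : Fin n → ℝ, Qbar.mulVec v = 0 ↔ ∃ c : ℝ, v = c • xt := by
    intro v
    constructor
    · intro hv
      rcases Nat.eq_zero_or_pos n with hn | hn
      · subst hn
        exact ⟨0, funext fun i => i.elim0⟩
      · have hq0 : v ⬝ᵥ Qbar.mulVec v = 0 := by rw [hv]; simp
        have hall : ∀ i j, (-(ut i * Q i j * xt j)) * (v i / xt i - v j / xt j) ^ 2 = 0 := by
          have h1 : ∑ i, ∑ j, (-(ut i * Q i j * xt j)) * (v i / xt i - v j / xt j) ^ 2 = 0 := by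
            rw [← key v, hq0]
          intro i j
          have h2 := (Finset.sum_eq_zero_iff_of_nonneg
            (fun i _ => Finset.sum_nonneg fun j _ => hterm_nonneg v i j)).mp h1 i
            (Finset.mem_univ i)
          exact (Finset.sum_eq_zero_iff_of_nonneg
            (fun j _ => hterm_nonneg v i j)).mp h2 j (Finset.mem_univ j)
        have hquot : ∀ i j, i ≠ j → Q i j ≠ 0 → v i / xt i = v j / xt j := by
          intro i j hij hQij
          have hlt : Q i j < 0 := lt_of_le_of_ne (hZ i j hij) hQij
          have h1 : -(ut i * Q i j * xt j) ≠ 0 := by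
            have h0 : 0 < ut i * (-(Q i j)) * xt j :=
              mul_pos (mul_pos (hu i) (neg_pos.mpr hlt)) (hx j)
            rw [show -(ut i * Q i j * xt j) = ut i * (-(Q i j)) * xt j from by ring]
            exact h0.ne'
          have := hall i j
          have h2 : (v i / xt i - v j / xt j) ^ 2 = 0 := by
            rcases mul_eq_zero.mp this with h | h
            · exact absurd h h1
            · exact h
          have := pow_eq_zero_iff (n := 2) (by norm_num) |>.mp h2
          linarith
        obtain ⟨i₀⟩ : Nonempty (Fin n) := ⟨⟨0, hn⟩⟩
        set S : Finset (Fin n) := Finset.univ.filter (fun i => v i / xt i = v i₀ / xt i₀)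
          with hS
        have hSuniv : S = Finset.univ := by
          by_contra hne
          have hSne : S.Nonempty := ⟨i₀, by simp [hS]⟩
          obtain ⟨i, hiS, j, hjS, hQij⟩ := hIrr S hSne hne
          have hij : i ≠ j := by
            intro h; subst h
            exact (Finset.mem_compl.mp hjS) hiS
          have h1 : v i / xt i = v i₀ / xt i₀ := by
            simpa [hS] using hiS
          have h2 : v j / xt j ≠ v i₀ / xt i₀ := by
            have := Finset.mem_compl.mp hjS
            simpa [hS] using this
          exact h2 ((hquot i j hij hQij).symm.trans h1)
        refine ⟨v i₀ / xt i₀, funext fun i => ?_⟩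
        have hiS : i ∈ S := hSuniv ▸ Finset.mem_univ i
        have h1 : v i / xt i = v i₀ / xt i₀ := by simpa [hS] using hiS
        have := hxne i
        simp only [Pi.smul_apply, smul_eq_mul]
        field_simp at h1 ⊢
        linarith [h1]
    · rintro ⟨c, rfl⟩
      rw [Matrix.mulVec_smul, hQbarxt]
      simp
  refine ⟨hPSD, hQbarxt, hiff, ?_⟩
  -- rank
  rcases Nat.eq_zero_or_pos n with hn | hn
  · subst hn
    have := Matrix.rank_le_card_width Qbar
    simp at this
    simpa using this
  · have hxt0 : xt ≠ 0 := by
      intro h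
      have := hx ⟨0, hn⟩
      rw [h] at this
      simp at this
    have hker : LinearMap.ker Qbar.mulVecLin = Submodule.span ℝ {xt} := by
      ext v
      rw [LinearMap.mem_ker, Matrix.mulVecLin_apply, Submodule.mem_span_singleton, hiff v]
      constructor
      · rintro ⟨c, rfl⟩; exact ⟨c, rfl⟩
      · rintro ⟨c, rfl⟩; exact ⟨c, rfl⟩
    have hrn := LinearMap.finrank_range_add_finrank_ker Qbar.mulVecLin
    rw [hker, finrank_span_singleton hxt0] at hrn
    have hfr : Module.finrank ℝ (Fin n → ℝ) = n := by simp
    rw [hfr] at hrn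
    have hrank : Qbar.rank = Module.finrank ℝ (LinearMap.range Qbar.mulVecLin) := rfl
    omega
end

section
/- Consider the 3n×3n Jacobian matrix of the tri-virus system at a point with all x^k ≥ 0 entrywise, B^k nonnegative, and suppose for some index i ∈ [n] all three quantities (B^1 x^1)_i, (B^2 x^2)_i, (B^3 x^3)_i are strictly positive. Then the associated signed graph on 3n nodes (with an edge j → i of sign equal to the sign of J_{ij} for i ≠ j, J_{ij} ≠ 0) contains a 3-cycle through nodes i, i+n, i+2n in which all three edges have negative sign; hence the signed graph is not consistent (it contains an undirected cycle with an odd number of negative edges). -/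
open Matrix

/-- The signed graph of the tri-virus Jacobian contains a 3-cycle
through nodes `(0,i), (1,i), (2,i)` with all three edges negative, hence it is
not consistent: no ±1 vertex labeling `σ` can realize all edge signs as products
of endpoint labels. -/
theorem stmt_15 {n : ℕ} (D B : Fin 3 → Matrix (Fin n) (Fin n) ℝ)
    (x : Fin 3 → Fin n → ℝ)
    (hx : ∀ k i, 0 ≤ x k i) (hB : ∀ k i j, 0 ≤ B k i j)
    (i : Fin n) (hpos : ∀ k, 0 < (B k).mulVec (x k) i)
    (J : Fin 3 × Fin n → Fin 3 × Fin n → ℝ)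
    (hJ : ∀ p q : Fin 3 × Fin n, J p q =
      if p.1 = q.1 then
        (-(D p.1) + (1 - Matrix.diagonal (x 0 + x 1 + x 2)) * B p.1
          - Matrix.diagonal ((B p.1).mulVec (x p.1))) p.2 q.2
      else if p.2 = q.2 then -((B p.1).mulVec (x p.1)) p.2 else 0) :
    (J (0, i) (1, i) < 0 ∧ J (1, i) (2, i) < 0 ∧ J (2, i) (0, i) < 0) ∧
      ¬ ∃ σ : Fin 3 × Fin n → ℝ, (∀ v, σ v = 1 ∨ σ v = -1) ∧
        ∀ v w, v ≠ w → J v w ≠ 0 → 0 < σ v * σ w * J v w := by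
  have hJval : ∀ k k' : Fin 3, k ≠ k' → J (k, i) (k', i) = -((B k).mulVec (x k)) i := by
    intro k k' hkk'
    rw [hJ]
    simp [hkk']
  have h01 : J (0, i) (1, i) < 0 := by
    rw [hJval 0 1 (by decide)]; linarith [hpos 0]
  have h12 : J (1, i) (2, i) < 0 := by
    rw [hJval 1 2 (by decide)]; linarith [hpos 1]
  have h20 : J (2, i) (0, i) < 0 := by
    rw [hJval 2 0 (by decide)]; linarith [hpos 2]
  refine ⟨⟨h01, h12, h20⟩, ?_⟩
  rintro ⟨σ, hσ, hedge⟩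
  have hne : ∀ k k' : Fin 3, k ≠ k' → ((k, i) : Fin 3 × Fin n) ≠ (k', i) := by
    intro k k' h hc; exact h (congrArg Prod.fst hc)
  have e01 := hedge (0, i) (1, i) (hne 0 1 (by decide)) (ne_of_lt h01)
  have e12 := hedge (1, i) (2, i) (hne 1 2 (by decide)) (ne_of_lt h12)
  have e20 := hedge (2, i) (0, i) (hne 2 0 (by decide)) (ne_of_lt h20)
  have n01 : σ (0, i) * σ (1, i) < 0 := by
    rcases lt_trichotomy (σ (0, i) * σ (1, i)) 0 with h | h | h
    · exact h
    · nlinarith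
    · nlinarith
  have n12 : σ (1, i) * σ (2, i) < 0 := by
    rcases lt_trichotomy (σ (1, i) * σ (2, i)) 0 with h | h | h
    · exact h
    · nlinarith
    · nlinarith
  have n20 : σ (2, i) * σ (0, i) < 0 := by
    rcases lt_trichotomy (σ (2, i) * σ (0, i)) 0 with h | h | h
    · exact h
    · nlinarith
    · nlinarith
  have sq : ∀ v, σ v * σ v = 1 := by
    intro v; rcases hσ v with h | h <;> rw [h] <;> ring
  have hneg := mul_neg_of_pos_of_neg (mul_pos_of_neg_of_neg n01 n12) n20
  nlinarith [sq (0, i), sq (1, i), sq (2, i)]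
end

section
/- Let D be positive diagonal and B nonnegative with s(B - D) ≤ 0 (equivalently ρ(D^{-1}B) ≤ 1 when B is irreducible). Then the only solution x ∈ [0,1]ⁿ of the equilibrium equation (-D + (I - diag(x)) B) x = 0 is x = 0. -/
open Matrix
open scoped ENNReal NNReal

attribute [local instance] Matrix.linftyOpSeminormedAddCommGroup Matrix.linftyOpNormedAddCommGroup
  Matrix.linftyOpNonUnitalSemiNormedRing Matrix.linftyOpSemiNormedRing
  Matrix.linftyOpNonUnitalNormedRing Matrix.linftyOpNormedRing
  Matrix.linftyOpNormedSpace Matrix.linftyOpNormedAlgebra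

open Filter in
/-- Key auxiliary: if a real matrix `M` has nonnegative entries and `M *ᵥ x ≥ r • x`
for a nonnegative vector `x` which is positive in some coordinate, then the spectral
radius of `M` (as a complex matrix) is at least `r`. -/
theorem aux_specRadius_lower {n : ℕ} (M : Matrix (Fin n) (Fin n) ℝ)
    (hM : ∀ i j, 0 ≤ M i j) (x : Fin n → ℝ) (hx0 : ∀ i, 0 ≤ x i)
    (i₀ : Fin n) (hxi₀ : 0 < x i₀) (r : ℝ) (hr : 0 ≤ r)
    (hMx : ∀ i, r * x i ≤ (M *ᵥ x) i) :
    ENNReal.ofReal r ≤ spectralRadius ℂ (M.map (algebraMap ℝ ℂ)) := by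
  haveI : CompleteSpace (Matrix (Fin n) (Fin n) ℂ) := FiniteDimensional.complete ℂ _
  set Mc := M.map (algebraMap ℝ ℂ) with hMc
  -- powers preserve the inequality
  have hMn : ∀ k : ℕ, ∀ i, r ^ k * x i ≤ ((M ^ k) *ᵥ x) i := by
    intro k
    induction k with
    | zero => intro i; simp [Matrix.one_mulVec]
    | succ k ih =>
      intro i
      have h1 : (M ^ (k + 1)) *ᵥ x = M *ᵥ ((M ^ k) *ᵥ x) := by
        rw [Matrix.mulVec_mulVec, ← pow_succ']
      rw [h1]
      calc r ^ (k + 1) * x i = r ^ k * (r * x i) := by ring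
        _ ≤ r ^ k * (M *ᵥ x) i :=
            mul_le_mul_of_nonneg_left (hMx i) (pow_nonneg hr k)
        _ = ∑ j, M i j * (r ^ k * x j) := by
            simp only [Matrix.mulVec, dotProduct, Finset.mul_sum]
            congr 1; ext j; ring
        _ ≤ ∑ j, M i j * ((M ^ k) *ᵥ x) j :=
            Finset.sum_le_sum fun j _ => mul_le_mul_of_nonneg_left (ih j) (hM i j)
        _ = (M *ᵥ ((M ^ k) *ᵥ x)) i := rfl
  have hMnx0 : ∀ k : ℕ, ∀ i, 0 ≤ ((M ^ k) *ᵥ x) i := fun k i =>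
    le_trans (mul_nonneg (pow_nonneg hr k) (hx0 i)) (hMn k i)
  -- complex vector
  set xc : Fin n → ℂ := fun i => (x i : ℂ) with hxc
  have hN : 0 < ‖xc‖ := by
    have h1 : ‖xc i₀‖ ≤ ‖xc‖ := norm_le_pi_norm xc i₀
    have h2 : ‖xc i₀‖ = x i₀ := by
      simp [hxc, Complex.norm_real, abs_of_nonneg (le_of_lt hxi₀), Real.norm_eq_abs]
    linarith
  -- norm lower bound for powers
  have hnorm : ∀ k : ℕ, r ^ k * (x i₀ / ‖xc‖) ≤ ‖Mc ^ k‖ := by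
    intro k
    have hpow : Mc ^ k = (M ^ k).map (algebraMap ℝ ℂ) := by
      rw [hMc]
      have hmm : ∀ N : Matrix (Fin n) (Fin n) ℝ, N.map (algebraMap ℝ ℂ) =
          (algebraMap ℝ ℂ).mapMatrix N := fun N => rfl
      rw [hmm, hmm, ← map_pow]
    have hvec : (Mc ^ k) *ᵥ xc = fun i => (((M ^ k) *ᵥ x) i : ℂ) := by
      funext i
      rw [hpow]
      simp only [Matrix.mulVec, dotProduct, Matrix.map_apply, hxc]
      push_cast
      rfl
    have h1 : ‖(Mc ^ k) *ᵥ xc‖ ≤ ‖Mc ^ k‖ * ‖xc‖ := Matrix.linfty_opNorm_mulVec _ _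
    have h2 : r ^ k * x i₀ ≤ ‖(Mc ^ k) *ᵥ xc‖ := by
      have h3 : ‖((Mc ^ k) *ᵥ xc) i₀‖ ≤ ‖(Mc ^ k) *ᵥ xc‖ := norm_le_pi_norm _ i₀
      have h4 : ‖((Mc ^ k) *ᵥ xc) i₀‖ = ((M ^ k) *ᵥ x) i₀ := by
        rw [hvec]
        simp [Complex.norm_real, Real.norm_eq_abs, abs_of_nonneg (hMnx0 k i₀)]
      calc r ^ k * x i₀ ≤ ((M ^ k) *ᵥ x) i₀ := hMn k i₀
        _ = ‖((Mc ^ k) *ᵥ xc) i₀‖ := h4.symm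
        _ ≤ ‖(Mc ^ k) *ᵥ xc‖ := h3
    have h5 : r ^ k * x i₀ ≤ ‖Mc ^ k‖ * ‖xc‖ := le_trans h2 h1
    rw [← mul_div_assoc, div_le_iff₀ hN]
    exact h5
  -- Gelfand's formula
  rcases eq_or_lt_of_le hr with hr0 | hrpos
  · simp [← hr0]
  set c := x i₀ / ‖xc‖ with hc
  have hcpos : 0 < c := div_pos hxi₀ hN
  have hf : Tendsto (fun k : ℕ => ENNReal.ofReal (‖Mc ^ k‖ ^ (1 / k : ℝ))) atTop
      (nhds (spectralRadius ℂ Mc)) :=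
    spectrum.pow_norm_pow_one_div_tendsto_nhds_spectralRadius Mc
  have hg : Tendsto (fun k : ℕ => ENNReal.ofReal (c ^ (1 / k : ℝ) * r)) atTop
      (nhds (ENNReal.ofReal r)) := by
    have h1 : Tendsto (fun k : ℕ => (1 / k : ℝ)) atTop (nhds 0) :=
      tendsto_one_div_atTop_nhds_zero_nat
    have h2 : ContinuousAt (fun s : ℝ => c ^ s) 0 :=
      Real.continuousAt_const_rpow (ne_of_gt hcpos)
    have h3 : Tendsto (fun k : ℕ => c ^ (1 / k : ℝ)) atTop (nhds 1) := by
      have h3' := h2.tendsto.comp h1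
      simpa [Real.rpow_zero, Function.comp_def] using h3'
    have h4 : Tendsto (fun k : ℕ => c ^ (1 / k : ℝ) * r) atTop (nhds r) := by
      have := h3.mul (tendsto_const_nhds (x := r))
      simpa using this
    exact (ENNReal.continuous_ofReal.tendsto r).comp h4
  refine le_of_tendsto_of_tendsto hg hf ?_
  filter_upwards [Filter.eventually_gt_atTop 0] with k hk
  apply ENNReal.ofReal_le_ofReal
  have hk0 : (k : ℝ) ≠ 0 := Nat.cast_ne_zero.mpr hk.ne'
  have h5 : c * r ^ k ≤ ‖Mc ^ k‖ := by
    have := hnorm k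
    calc c * r ^ k = r ^ k * (x i₀ / ‖xc‖) := by rw [hc]; ring
      _ ≤ ‖Mc ^ k‖ := this
  have h6 : (c * r ^ k) ^ (1 / k : ℝ) ≤ ‖Mc ^ k‖ ^ (1 / k : ℝ) :=
    Real.rpow_le_rpow (by positivity) h5 (by positivity)
  calc c ^ (1 / k : ℝ) * r = (c * r ^ k) ^ (1 / k : ℝ) := by
        rw [Real.mul_rpow (le_of_lt hcpos) (by positivity), ← Real.rpow_natCast r k,
          ← Real.rpow_mul hr, mul_one_div_cancel hk0, Real.rpow_one]
    _ ≤ ‖Mc ^ k‖ ^ (1 / k : ℝ) := h6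

/-- If `s(B - D) ≤ 0`, the only solution `x ∈ [0,1]ⁿ` of the
single-virus equilibrium equation `(-D + (I - diag(x))B)x = 0` is `x = 0`. -/
theorem stmt_16 {n : ℕ} (d : Fin n → ℝ) (hd : ∀ i, 0 < d i)
    (B : Matrix (Fin n) (Fin n) ℝ) (hB : ∀ i j, 0 ≤ B i j)
    (hs : spectralAbscissa (B - Matrix.diagonal d) ≤ 0)
    (x : Fin n → ℝ) (hx : ∀ i, 0 ≤ x i ∧ x i ≤ 1)
    (heq : (-(Matrix.diagonal d) + (1 - Matrix.diagonal x) * B).mulVec x = 0) :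
    x = 0 := by
  classical
  haveI : CompleteSpace (Matrix (Fin n) (Fin n) ℂ) := FiniteDimensional.complete ℂ _
  by_contra hne
  obtain ⟨i₀, hi₀⟩ : ∃ i, x i ≠ 0 := by
    by_contra h
    push_neg at h
    exact hne (funext fun i => h i)
  have hxi₀ : 0 < x i₀ := lt_of_le_of_ne (hx i₀).1 (Ne.symm hi₀)
  haveI : Nonempty (Fin n) := ⟨i₀⟩
  set A := B - Matrix.diagonal d with hA
  set y := B *ᵥ x with hy
  have hy0 : ∀ i, 0 ≤ y i := by
    intro i
    rw [hy]
    show (0:ℝ) ≤ ∑ j, B i j * x j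
    exact Finset.sum_nonneg fun j _ => mul_nonneg (hB i j) (hx j).1
  -- componentwise equilibrium equation
  have hfun : ∀ i, ((-(Matrix.diagonal d) + (1 - Matrix.diagonal x) * B) *ᵥ x) i
      = -(d i * x i) + (y i - x i * y i) := by
    intro i
    have e1 : (1 - Matrix.diagonal x) * B = B - Matrix.diagonal x * B := by
      rw [sub_mul, one_mul]
    rw [Matrix.add_mulVec, Matrix.neg_mulVec, e1, Matrix.sub_mulVec,
      ← Matrix.mulVec_mulVec]
    simp only [Pi.add_apply, Pi.neg_apply, Pi.sub_apply, Matrix.mulVec_diagonal]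
    rfl
  have hkey : ∀ i, d i * x i = (1 - x i) * y i := by
    intro i
    have h := congrFun heq i
    rw [hfun i] at h
    simp only [Pi.zero_apply] at h
    linear_combination -h
  have hypos : ∀ i, 0 < x i → 0 < y i := by
    intro i hxi
    by_contra h
    push_neg at h
    have h2 : (1 - x i) * y i ≤ 0 :=
      mul_nonpos_of_nonneg_of_nonpos (by linarith [(hx i).2]) h
    have h3 : 0 < d i * x i := mul_pos (hd i) hxi
    linarith [hkey i]
  have hAx : ∀ i, (A *ᵥ x) i = x i * y i := by
    intro i
    rw [hA, Matrix.sub_mulVec]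
    simp only [Pi.sub_apply, Matrix.mulVec_diagonal, ← hy]
    have h := hkey i
    linarith [h]
  -- the positive lower bound ε
  set S : Finset (Fin n) := Finset.univ.filter (fun i => 0 < x i) with hS
  have hSne : S.Nonempty := ⟨i₀, by simp [hS, hxi₀]⟩
  set ε := S.inf' hSne y with hε'
  have hε : 0 < ε := by
    rw [hε', Finset.lt_inf'_iff]
    intro b hb
    exact hypos b (by simpa [hS] using hb)
  have hεx : ∀ i, ε * x i ≤ (A *ᵥ x) i := by
    intro i
    rw [hAx i]
    rcases (hx i).1.lt_or_eq with h1 | h1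
    · have h2 : ε ≤ y i := Finset.inf'_le _ (by simp [hS, h1])
      calc ε * x i ≤ y i * x i := mul_le_mul_of_nonneg_right h2 (le_of_lt h1)
        _ = x i * y i := mul_comm _ _
    · rw [← h1]; simp
  -- bounds on the spectrum of A
  have hcompact : IsCompact (specSet A) := spectrum.isCompact _
  have hbdd_re : BddAbove (Complex.re '' specSet A) :=
    (hcompact.image Complex.continuous_re).bddAbove
  have hre : ∀ z ∈ specSet A, z.re ≤ 0 := fun z hz =>
    le_trans (le_csSup hbdd_re ⟨z, hz, rfl⟩) hs
  have hbdd_abs : BddAbove ((fun z : ℂ => ‖z‖) '' specSet A) :=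
    (hcompact.image continuous_norm).bddAbove
  set R := max (sSup ((fun z : ℂ => ‖z‖) '' specSet A)) 0 with hR
  have hR0 : 0 ≤ R := le_max_right _ _
  have habs : ∀ z ∈ specSet A, ‖z‖ ≤ R := fun z hz =>
    le_trans (le_csSup hbdd_abs ⟨z, hz, rfl⟩) (le_max_left _ _)
  -- choice of the shift t
  set t := (Finset.univ.sup' Finset.univ_nonempty d) + R ^ 2 / (2 * ε) + 1 with ht'
  have hdiv0 : 0 ≤ R ^ 2 / (2 * ε) := by positivity
  have htd : ∀ i, d i ≤ t := by
    intro i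
    have h1 : d i ≤ Finset.univ.sup' Finset.univ_nonempty d :=
      Finset.le_sup' d (Finset.mem_univ i)
    rw [ht']
    linarith
  have ht0 : 0 < t := lt_of_lt_of_le (hd i₀) (htd i₀)
  have htR : R ^ 2 < 2 * t * ε := by
    have hsup : 0 < Finset.univ.sup' Finset.univ_nonempty d :=
      lt_of_lt_of_le (hd i₀) (Finset.le_sup' d (Finset.mem_univ i₀))
    have h2 : R ^ 2 / (2 * ε) < t := by rw [ht']; linarith
    calc R ^ 2 = R ^ 2 / (2 * ε) * (2 * ε) := by field_simp
      _ < t * (2 * ε) := mul_lt_mul_of_pos_right h2 (by positivity)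
      _ = 2 * t * ε := by ring
  -- the shifted nonnegative matrix M
  set M := A + Matrix.diagonal (fun _ : Fin n => t) with hM'
  have hM0 : ∀ i j, 0 ≤ M i j := by
    intro i j
    by_cases hij : i = j
    · subst hij
      rw [hM', hA]
      simp only [Matrix.add_apply, Matrix.sub_apply, Matrix.diagonal_apply_eq]
      linarith [htd i, hB i i]
    · rw [hM', hA]
      simp only [Matrix.add_apply, Matrix.sub_apply, Matrix.diagonal_apply_ne _ hij]
      simpa using hB i j
  have hMx : ∀ i, (t + ε) * x i ≤ (M *ᵥ x) i := by
    intro i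
    rw [hM', Matrix.add_mulVec]
    simp only [Pi.add_apply, Matrix.mulVec_diagonal]
    have h := hεx i
    nlinarith [h]
  -- lower bound for the spectral radius of M
  have hlow := aux_specRadius_lower M hM0 x (fun i => (hx i).1) i₀ hxi₀ (t + ε)
    (by positivity) hMx
  -- M over ℂ is A over ℂ plus a scalar
  have hMceq : M.map (algebraMap ℝ ℂ) = A.map (algebraMap ℝ ℂ)
      + algebraMap ℂ (Matrix (Fin n) (Fin n) ℂ) ((t : ℝ) : ℂ) := by
    rw [hM']
    ext i j
    by_cases hij : i = j
    · subst hij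
      simp [Matrix.map_apply, Matrix.add_apply, map_add, Matrix.algebraMap_eq_diagonal,
        Pi.algebraMap_apply, Matrix.diagonal_apply_eq]
    · simp [Matrix.map_apply, Matrix.add_apply, map_add, Matrix.algebraMap_eq_diagonal,
        Pi.algebraMap_apply, Matrix.diagonal_apply_ne _ hij]
  -- upper bound for the spectral radius of M
  have hup : spectralRadius ℂ (M.map (algebraMap ℝ ℂ))
      ≤ ENNReal.ofReal (Real.sqrt (R ^ 2 + t ^ 2)) := by
    have hdef : spectralRadius ℂ (M.map (algebraMap ℝ ℂ))
        = ⨆ k ∈ spectrum ℂ (M.map (algebraMap ℝ ℂ)), (‖k‖₊ : ENNReal) := rfl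
    rw [hdef]
    refine iSup₂_le fun z hz => ?_
    rw [hMceq, ← spectrum.add_singleton_eq] at hz
    obtain ⟨μ, hμ, cc, hcc, rfl⟩ := Set.mem_add.mp hz
    rw [Set.mem_singleton_iff] at hcc
    subst hcc
    have h1 : ‖μ‖ ≤ R := habs μ hμ
    have h2 : μ.re ≤ 0 := hre μ hμ
    have habs2 : ‖μ + ((t : ℝ) : ℂ)‖ ≤ Real.sqrt (R ^ 2 + t ^ 2) := by
      rw [Real.le_sqrt (norm_nonneg _) (by positivity)]
      have h3 : ‖μ + ((t : ℝ) : ℂ)‖ ^ 2 = (μ.re + t) ^ 2 + μ.im ^ 2 := by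
        rw [Complex.sq_norm, Complex.normSq_apply]
        simp [Complex.add_re, Complex.add_im]
        ring
      have h4 : μ.re ^ 2 + μ.im ^ 2 ≤ R ^ 2 := by
        have h5 := Complex.sq_norm μ
        rw [Complex.normSq_apply] at h5
        nlinarith [norm_nonneg μ]
      rw [h3]
      nlinarith
    calc (‖μ + ((t : ℝ) : ℂ)‖₊ : ℝ≥0∞)
        = ENNReal.ofReal ‖μ + ((t : ℝ) : ℂ)‖ := (ofReal_norm _).symm
      _ ≤ ENNReal.ofReal (Real.sqrt (R ^ 2 + t ^ 2)) :=
          ENNReal.ofReal_le_ofReal habs2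
  -- combine and derive a contradiction
  have hfin : t + ε ≤ Real.sqrt (R ^ 2 + t ^ 2) := by
    have h := le_trans hlow hup
    rwa [ENNReal.ofReal_le_ofReal_iff (Real.sqrt_nonneg _)] at h
  have hfin2 : (t + ε) ^ 2 ≤ R ^ 2 + t ^ 2 :=
    (Real.le_sqrt (by positivity) (by positivity)).mp hfin
  nlinarith [htR, hε]
end

section
/- Let D be positive diagonal, B nonnegative irreducible, and let x̃ with 0 ≪ x̃ ≪ 1 satisfy (−D + (I − diag(x̃))B) x̃ = 0. Define Q = D − (I − diag(x̃))B. Then Q is a singular irreducible M-matrix: all off-diagonal entries of Q are nonpositive, 0 is an eigenvalue of Q (with eigenvector x̃), and every eigenvalue of Q has nonnegative real part. -/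
open Matrix

/-- If `x̃` with `0 ≪ x̃ ≪ 1` satisfies the endemic equilibrium
equation, then `Q = D - (I - diag(x̃))B` is a singular irreducible M-matrix:
its off-diagonal entries are nonpositive, it is irreducible, `0` is an
eigenvalue with eigenvector `x̃`, and every eigenvalue of `Q` has nonnegative
real part. -/
theorem stmt_19 {n : ℕ} (d : Fin n → ℝ) (hd : ∀ i, 0 < d i)
    (B : Matrix (Fin n) (Fin n) ℝ) (hB : ∀ i j, 0 ≤ B i j) (hBirr : IrreducibleMat B)
    (xt : Fin n → ℝ) (hx : ∀ i, 0 < xt i ∧ xt i < 1)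
    (heq : (-(Matrix.diagonal d) + (1 - Matrix.diagonal xt) * B).mulVec xt = 0)
    (Q : Matrix (Fin n) (Fin n) ℝ)
    (hQ : Q = Matrix.diagonal d - (1 - Matrix.diagonal xt) * B) :
    (∀ i j, i ≠ j → Q i j ≤ 0) ∧ IrreducibleMat Q ∧
      Q.mulVec xt = 0 ∧ (∀ z ∈ specSet Q, 0 ≤ z.re) := by
  -- M entries
  have hM : ∀ i j, ((1 - Matrix.diagonal xt) * B) i j = (1 - xt i) * B i j := by
    intro i j
    have h1 : (1 - Matrix.diagonal xt : Matrix (Fin n) (Fin n) ℝ)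
        = Matrix.diagonal (fun i => 1 - xt i) := by
      rw [← Matrix.diagonal_one, ← Matrix.diagonal_sub]
    rw [h1, Matrix.diagonal_mul]
  have hQentry : ∀ i j, Q i j = Matrix.diagonal d i j - (1 - xt i) * B i j := by
    intro i j; rw [hQ]; simp [Matrix.sub_apply, hM]
  have hxpos : ∀ i, 0 < xt i := fun i => (hx i).1
  have h1x : ∀ i, 0 < 1 - xt i := fun i => by linarith [(hx i).2]
  -- off-diagonal entries
  have hoff : ∀ i j, i ≠ j → Q i j = -((1 - xt i) * B i j) := by
    intro i j hij
    rw [hQentry, Matrix.diagonal_apply_ne _ hij]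
    ring
  have hmetz : ∀ i j, i ≠ j → Q i j ≤ 0 := by
    intro i j hij
    rw [hoff i j hij]
    have := mul_nonneg (h1x i).le (hB i j)
    linarith
  -- Q x = 0
  have hQx : Q.mulVec xt = 0 := by
    have : Q = -(-(Matrix.diagonal d) + (1 - Matrix.diagonal xt) * B) := by
      rw [hQ]; abel
    rw [this, Matrix.neg_mulVec, heq, neg_zero]
  -- irreducibility
  have hirr : IrreducibleMat Q := by
    intro S hS hS'
    obtain ⟨i, hi, j, hj, hBij⟩ := hBirr S hS hS'
    refine ⟨i, hi, j, hj, ?_⟩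
    have hij : i ≠ j := by
      rintro rfl
      exact absurd hi (Finset.mem_compl.mp hj)
    rw [hoff i j hij]
    intro h
    have := neg_eq_zero.mp h
    rcases mul_eq_zero.mp this with h | h
    · exact absurd h (h1x i).ne'
    · exact hBij h
  refine ⟨hmetz, hirr, hQx, ?_⟩
  -- spectral part
  intro z hz
  set Qc : Matrix (Fin n) (Fin n) ℂ := Q.map (algebraMap ℝ ℂ) with hQc
  have hspec : z ∈ spectrum ℂ (Matrix.toLinAlgEquiv' Qc) := by
    rwa [AlgEquiv.spectrum_eq Matrix.toLinAlgEquiv']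
  have heig : Module.End.HasEigenvalue (Matrix.toLinAlgEquiv' Qc) z :=
    Module.End.hasEigenvalue_iff_mem_spectrum.mpr hspec
  obtain ⟨v, hv, hv0⟩ := heig.exists_hasEigenvector
  cases isEmpty_or_nonempty (Fin n) with
  | inl h => exact absurd (Subsingleton.elim v 0) hv0
  | inr hne =>
  have hvEq : Qc.mulVec v = z • v := by
    have := Module.End.mem_eigenspace_iff.mp hv
    rwa [Matrix.toLinAlgEquiv'_apply] at this
  -- pick index maximizing ‖v i‖ / xt i
  obtain ⟨i, -, h_i⟩ := Finset.exists_mem_eq_sup' (Finset.univ_nonempty (α := Fin n))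
    (fun j => ‖v j‖ / xt j)
  have hmax : ∀ j, ‖v j‖ / xt j ≤ ‖v i‖ / xt i := fun j =>
    h_i ▸ Finset.le_sup' (fun j => ‖v j‖ / xt j) (Finset.mem_univ j)
  have hvi : v i ≠ 0 := by
    intro h0
    apply hv0
    ext j
    have hj := hmax j
    rw [h0] at hj
    simp only [norm_zero, map_zero, zero_div] at hj
    have : ‖v j‖ / xt j ≥ 0 := div_nonneg (norm_nonneg _) (hxpos j).le
    have hj0 : ‖v j‖ / xt j = 0 := le_antisymm hj this
    have : ‖v j‖ = 0 := by
      rcases div_eq_zero_iff.mp hj0 with h | h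
      · exact h
      · exact absurd h (hxpos j).ne'
    simpa using norm_eq_zero.mp this
  have hvile : ∀ j, ‖v j‖ ≤ ‖v i‖ * xt j / xt i := by
    intro j
    have := hmax j
    rw [div_le_div_iff₀ (hxpos j) (hxpos i)] at this
    rw [le_div_iff₀ (hxpos i)]
    linarith
  -- row equation and the real balance equation
  set c : Fin n → ℝ := fun j => (1 - xt i) * B i j with hc
  have hcpos : ∀ j, 0 ≤ c j := fun j => mul_nonneg (h1x i).le (hB i j)
  have hbal : ∑ j, c j * xt j = d i * xt i := by
    have h0 := congrFun heq i
    simp only [Matrix.mulVec, dotProduct, Matrix.add_apply, Pi.zero_apply,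
      Matrix.neg_apply] at h0
    have : ∑ j, ((-(Matrix.diagonal d) + (1 - Matrix.diagonal xt) * B) i j) * xt j = 0 := h0
    rw [Finset.sum_congr rfl (fun j _ => by
      rw [Matrix.add_apply, Matrix.neg_apply, hM, add_mul])] at this
    rw [Finset.sum_add_distrib] at this
    have hdiag : ∑ j, -(Matrix.diagonal d i j) * xt j = -(d i * xt i) := by
      rw [Finset.sum_eq_single i]
      · simp [Matrix.diagonal_apply_eq]
      · intro j _ hj
        simp [Matrix.diagonal_apply_ne' _ hj]
      · simp
    rw [hdiag] at this
    simp only [hc]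
    linarith
  -- complex row equation: z * v i = d i * v i - ∑ c j * v j
  have hrow : z * v i = (d i : ℂ) * v i - ∑ j, (c j : ℂ) * v j := by
    have h1 := congrFun hvEq i
    simp only [Matrix.mulVec, dotProduct, Pi.smul_apply, smul_eq_mul] at h1
    have hQcij : ∀ j, Qc i j = ((Matrix.diagonal d i j : ℝ) : ℂ) - ((c j : ℝ) : ℂ) := by
      intro j
      simp only [hQc, Matrix.map_apply, hQentry, hc, Complex.coe_algebraMap]
      push_cast
      ring
    rw [Finset.sum_congr rfl (fun j _ => by rw [hQcij j, sub_mul])] at h1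
    rw [Finset.sum_sub_distrib] at h1
    have hdiag : ∑ j, ((Matrix.diagonal d i j : ℝ) : ℂ) * v j = (d i : ℂ) * v i := by
      rw [Finset.sum_eq_single i]
      · simp [Matrix.diagonal_apply_eq]
      · intro j _ hj
        simp [Matrix.diagonal_apply_ne' _ hj]
      · simp
    rw [hdiag] at h1
    exact h1.symm
  -- bound |z - d i| ≤ d i
  have habs : ‖z - d i‖ ≤ d i := by
    have hkey : ‖z - d i‖ * ‖v i‖
        = ‖∑ j, (c j : ℂ) * v j‖ := by
      rw [← norm_mul]
      have hh : (z - (d i : ℂ)) * v i = -(∑ j, (c j : ℂ) * v j) := by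
        rw [sub_mul, hrow]; ring
      rw [hh, norm_neg]
    have hbound : ‖∑ j, (c j : ℂ) * v j‖ ≤ d i * ‖v i‖ := by
      calc ‖∑ j, (c j : ℂ) * v j‖
          ≤ ∑ j, ‖(c j : ℂ) * v j‖ := by
            exact norm_sum_le _ _
        _ = ∑ j, c j * ‖v j‖ := by
            refine Finset.sum_congr rfl fun j _ => ?_
            rw [norm_mul, Complex.norm_real, Real.norm_of_nonneg (hcpos j)]
        _ ≤ ∑ j, c j * (‖v i‖ * xt j / xt i) := by
            refine Finset.sum_le_sum fun j _ => ?_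
            exact mul_le_mul_of_nonneg_left (hvile j) (hcpos j)
        _ = (∑ j, c j * xt j) * ‖v i‖ / xt i := by
            rw [Finset.sum_mul, Finset.sum_div]
            refine Finset.sum_congr rfl fun j _ => ?_
            ring
        _ = d i * ‖v i‖ := by
            rw [hbal]
            field_simp [(hxpos i).ne']
    have hvipos : 0 < ‖v i‖ := (norm_pos_iff.mpr hvi)
    have := hkey.trans_le hbound
    exact le_of_mul_le_mul_right (by linarith) hvipos
  -- conclude
  have hre : (z - (d i : ℂ)).re = z.re - d i := by simp
  have h2 := Complex.abs_re_le_norm (z - (d i : ℂ))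
  rw [hre] at h2
  have h3 := abs_le.mp (h2.trans habs)
  linarith [h3.1]
end
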